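/- arXiv:2210.16211 — 8 statements merged into one kernel-verified Lean document; each statement's English description precedes it below -/
import Mathlib

section
/- Let q ≥ 3 and n = 2q. If G is a connected graph on n vertices such that whenever a set of edges of G covers all vertices, some subset of those edges is a perfect matching, then G has at most C(q+1,2) edges, and the unique extremal graph is K_q with a pendant vertex attached to each of its q vertices. -/
open Finset SimpleGraph

private lemma walkClosed {V : Type*} {G : SimpleGraph V} (P : V → Prop)
    (hcl : ∀ u t, P u → G.Adj u t → P t) :
    ∀ {x r : V}, G.Reachable x r → P x → P r := by
  intro x r hre
  obtain ⟨pw⟩ := hre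
  induction pw with
  | nil => exact id
  | cons h p ih => exact fun hx => ih (hcl _ _ hx h)

/-- Let `n = 2q`, `q ≥ 3`, and let `G` be a connected graph on `n` vertices such
that every edge set covering all vertices contains a perfect matching. Then `G`
has at most `C(q+1,2)` edges, and equality holds only if `G` is isomorphic to
`K_q` with a pendant vertex attached to each of its `q` vertices. -/
theorem stmt4 (q n : ℕ) (hq : 3 ≤ q) (hn : n = 2 * q)
    (G : SimpleGraph (Fin n)) [DecidableRel G.Adj]
    (hconn : G.Connected)
    (hPM : ∀ E' ⊆ G.edgeFinset, (∀ v : Fin n, ∃ e ∈ E', v ∈ e) →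
      ∃ M ⊆ E', ∀ v : Fin n, ∃! e, e ∈ M ∧ v ∈ e) :
    G.edgeFinset.card ≤ (q + 1).choose 2 ∧
    (G.edgeFinset.card = (q + 1).choose 2 →
      Nonempty (G ≃g SimpleGraph.fromRel
        (fun x y : Fin q ⊕ Fin q =>
          (∃ a b, x = Sum.inl a ∧ y = Sum.inl b) ∨
          (∃ a, x = Sum.inl a ∧ y = Sum.inr a)))) := by
  classical
  have hcard : Fintype.card (Fin n) = 2 * q := by simp [hn]
  have hn6 : 6 ≤ n := by omega
  -- every vertex has a neighbor
  have hnbr : ∀ v : Fin n, ∃ u, G.Adj v u := by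
    intro v
    by_contra hno
    push_neg at hno
    obtain ⟨r, hr⟩ : ∃ r : Fin n, r ≠ v :=
      Fintype.exists_ne_of_one_lt_card (by omega) v
    have := walkClosed (G := G) (fun t => t = v)
      (fun u t hu hadj => absurd (hu ▸ hadj) (by simpa using hno t))
      (hconn.preconnected v r) rfl
    exact hr this
  -- extract the global perfect matching function m
  have hcoverE : ∀ v : Fin n, ∃ e ∈ G.edgeFinset, v ∈ e := by
    intro v
    obtain ⟨u, hu⟩ := hnbr v
    exact ⟨s(v,u), by simpa [SimpleGraph.mem_edgeFinset] using hu, by simp⟩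
  obtain ⟨M, hME, hM⟩ := hPM G.edgeFinset (subset_refl _) hcoverE
  have hm' : ∀ v : Fin n, ∃ u, G.Adj v u ∧ s(v,u) ∈ M ∧ ∀ e ∈ M, v ∈ e → e = s(v,u) := by
    intro v
    obtain ⟨e, ⟨heM, hve⟩, huni⟩ := hM v
    have heE : e ∈ G.edgeSet := by
      rw [← SimpleGraph.mem_edgeFinset]; exact hME heM
    refine ⟨Sym2.Mem.other hve, ?_, ?_, ?_⟩
    · have := Sym2.other_spec hve
      rw [← SimpleGraph.mem_edgeSet, this]
      exact heE
    · rw [Sym2.other_spec hve]; exact heM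
    · intro e' he' hve'
      rw [huni e' ⟨he', hve'⟩, Sym2.other_spec hve]
  choose m hadjm hmem huni using hm'
  have hinv : ∀ v, m (m v) = v := by
    intro v
    have h2 : m v ∈ s(v, m v) := Sym2.mem_mk_right _ _
    have h3 := huni (m v) _ (hmem v) h2
    rcases Sym2.eq_iff.1 h3 with ⟨h4, h5⟩ | ⟨h4, h5⟩
    · exact absurd h4 (hadjm v).ne
    · exact h4.symm
  have hmeq : ∀ {u v : Fin n}, m u = v → m v = u := by
    intro u v h; rw [← h, hinv]
  -- the key structural condition derived from hPM
  have condC : ∀ (v : Fin n) (L : Finset (Fin n)), (∀ a ∈ L, G.Adj v a) → 2 ≤ L.card →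
      ∃ w, w ∉ insert v L ∧ ∀ u, G.Adj w u → u ∈ insert v L := by
    intro v L hLadj hLcard
    by_contra hcon
    push_neg at hcon
    have hch : ∀ w : Fin n, ∃ u, w ∉ insert v L → (G.Adj w u ∧ u ∉ insert v L) := by
      intro w
      by_cases hw : w ∈ insert v L
      · exact ⟨w, fun h => absurd hw h⟩
      · obtain ⟨u, hu1, hu2⟩ := hcon w hw
        exact ⟨u, fun _ => ⟨hu1, hu2⟩⟩
    choose f hf using hch
    set E' : Finset (Sym2 (Fin n)) :=
      ((univ.filter (· ∉ insert v L)).image (fun w => s(w, f w))) ∪ (L.image (fun a => s(v,a))) with hE'def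
    have hE'sub : E' ⊆ G.edgeFinset := by
      intro e he
      rcases mem_union.1 he with h | h
      · obtain ⟨w, hw, rfl⟩ := mem_image.1 h
        have hw' := (mem_filter.1 hw).2
        simpa [SimpleGraph.mem_edgeFinset] using (hf w hw').1
      · obtain ⟨a, ha, rfl⟩ := mem_image.1 h
        simpa [SimpleGraph.mem_edgeFinset] using hLadj a ha
    have hE'cov : ∀ x : Fin n, ∃ e ∈ E', x ∈ e := by
      intro x
      by_cases hx : x ∈ insert v L
      · rcases mem_insert.1 hx with rfl | hx
        · obtain ⟨a, ha⟩ := Finset.card_pos.1 (by omega : 0 < L.card)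
          exact ⟨s(x,a), mem_union_right _ (mem_image_of_mem _ ha), by simp⟩
        · exact ⟨s(v,x), mem_union_right _ (mem_image_of_mem _ hx), by simp⟩
      · exact ⟨s(x, f x), mem_union_left _ (mem_image_of_mem _ (mem_filter.2 ⟨mem_univ _, hx⟩)),
          by simp⟩
    obtain ⟨M', hM'E, hM'⟩ := hPM E' hE'sub hE'cov
    have key : ∀ a ∈ L, s(v,a) ∈ M' := by
      intro a ha
      obtain ⟨e, ⟨heM, hae⟩, _⟩ := hM' a
      have heq : e = s(v,a) := by
        rcases mem_union.1 (hM'E heM) with h | h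
        · obtain ⟨w, hw, rfl⟩ := mem_image.1 h
          have hw' := (mem_filter.1 hw).2
          rcases Sym2.mem_iff.1 hae with rfl | rfl
          · exact absurd (mem_insert_of_mem ha) hw'
          · exact absurd (mem_insert_of_mem ha) (hf w hw').2
        · obtain ⟨a', ha', rfl⟩ := mem_image.1 h
          rcases Sym2.mem_iff.1 hae with rfl | rfl
          · exact absurd rfl (hLadj a ha).ne'
          · rfl
      rw [← heq]; exact heM
    obtain ⟨a, ha, b, hb, hab⟩ := Finset.one_lt_card.1 (by omega : 1 < L.card)
    obtain ⟨e, _, huniq⟩ := hM' v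
    have h1 := huniq (s(v,a)) ⟨key a ha, Sym2.mem_mk_left _ _⟩
    have h2 := huniq (s(v,b)) ⟨key b hb, Sym2.mem_mk_left _ _⟩
    have h3 : s(v,a) = s(v,b) := h1.trans h2.symm
    rcases Sym2.eq_iff.1 h3 with ⟨_, h5⟩ | ⟨h4, _⟩
    · exact hab (h5 ▸ rfl)
    · exact (hLadj b hb).ne' h4.symm
  -- Lemma A
  have lemA : ∀ u s' : Fin n, G.Adj u s' → s' ≠ m u →
      (m s' ≠ u ∧ m s' ≠ m u ∧ m s' ≠ s' ∧
        ∀ t, G.Adj (m s') t → (t = u ∨ t = m u ∨ t = s')) := by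
    intro u s' hus hne
    have hcard2 : 2 ≤ ({s', m u} : Finset (Fin n)).card := by
      rw [Finset.card_insert_of_notMem (by simpa using hne), Finset.card_singleton]
    obtain ⟨w, hw1, hw2⟩ := condC u {s', m u}
      (by
        intro a ha
        rcases Finset.mem_insert.1 ha with rfl | ha
        · exact hus
        · rw [Finset.mem_singleton.1 ha]; exact hadjm u) hcard2
    simp only [Finset.mem_insert, Finset.mem_singleton, not_or] at hw1
    obtain ⟨hwu, hws, hwmu⟩ := hw1
    have hmw := hw2 (m w) (hadjm w)
    simp only [Finset.mem_insert, Finset.mem_singleton] at hmw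
    rcases hmw with h | h | h
    · exact absurd (hmeq h).symm hwmu
    · -- m w = s', so w = m s'
      have hwms : m s' = w := hmeq h
      refine ⟨hwms ▸ hwu, hwms ▸ hwmu, hwms ▸ hws, ?_⟩
      intro t ht
      have := hw2 t (hwms ▸ ht)
      simpa [Finset.mem_insert, Finset.mem_singleton, or_comm, or_left_comm] using this
    · exact absurd ((hmeq h).symm.trans (hinv u)) hwu
  -- Claim 2 : if x has a neighbor besides m x, then m x is a pendant (its only neighbor is x)
  have claim2 : ∀ x : Fin n, (∃ a, G.Adj x a ∧ a ≠ m x) → ∀ b, G.Adj (m x) b → b = x := by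
    rintro x ⟨a, hxa, hanex⟩
    by_contra hcon
    push_neg at hcon
    obtain ⟨b, hyb, hbx⟩ := hcon
    obtain ⟨hw1, hw2, hw3, hE1⟩ := lemA x a hxa hanex
    -- hw1 : m a ≠ x, hw2 : m a ≠ m x, hw3 : m a ≠ a, hE1 : N(m a) ⊆ {x, m x, a}
    obtain ⟨hF1, hF2, hF3, hE2⟩ := lemA a x hxa.symm (fun h => hw1 h.symm)
    -- hF1 : m x ≠ a, hF2 : m x ≠ m a, hF3 : m x ≠ x, hE2 : N(m x) ⊆ {a, m a, x}
    by_cases hcase : ∀ t, G.Adj (m a) t → t = a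
    · -- Case 1 : m a is a pendant at a
      have hba : b = a := by
        rcases hE2 b hyb with h | h | h
        · exact h
        · exfalso
          have := hcase (m x) (h ▸ hyb.symm)
          exact hF1 this
        · exact absurd h hbx
      have hya : G.Adj a (m x) := (hba ▸ hyb).symm
      have hLadj : ∀ t ∈ ({x, m x, m a} : Finset (Fin n)), G.Adj a t := by
        intro t ht
        simp only [Finset.mem_insert, Finset.mem_singleton] at ht
        rcases ht with rfl | rfl | rfl
        · exact hxa.symm
        · exact hya
        · exact hadjm a
      have hLcard : 2 ≤ ({x, m x, m a} : Finset (Fin n)).card :=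
        Finset.one_lt_card.2 ⟨x, by simp, m x, by simp, (hadjm x).ne⟩
      obtain ⟨z, hz1, hz2⟩ := condC a {x, m x, m a} hLadj hLcard
      have hmz := hz2 (m z) (hadjm z)
      simp only [Finset.mem_insert, Finset.mem_singleton, not_or] at hmz hz1
      obtain ⟨hza, hzx, hzmx, hzma⟩ := hz1
      rcases hmz with h | h | h | h
      · exact hzma ((hmeq h).symm)
      · exact hzmx ((hmeq h).symm)
      · exact hzx (((hmeq h).symm).trans (hinv x))
      · exact hza (((hmeq h).symm).trans (hinv a))
    · -- Case 2 : m a has a neighbor besides a; the component is {x, m x, a, m a}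
      push_neg at hcase
      obtain ⟨t₀, ht₀adj, ht₀a⟩ := hcase
      have ht₀ : t₀ = x ∨ t₀ = m x := by
        rcases hE1 t₀ ht₀adj with h | h | h
        · exact Or.inl h
        · exact Or.inr h
        · exact absurd h ht₀a
      set P : Fin n → Prop := fun r => r = x ∨ r = m x ∨ r = a ∨ r = m a with hP
      have hNy : ∀ t, G.Adj (m x) t → P t := by
        intro t ht
        rcases hE2 t ht with h | h | h
        · exact Or.inr (Or.inr (Or.inl h))
        · exact Or.inr (Or.inr (Or.inr h))
        · exact Or.inl h
      have hNw : ∀ t, G.Adj (m a) t → P t := by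
        intro t ht
        rcases hE1 t ht with h | h | h
        · exact Or.inl h
        · exact Or.inr (Or.inl h)
        · exact Or.inr (Or.inr (Or.inl h))
      have hNx : ∀ t, G.Adj x t → P t := by
        intro s' hs'
        by_cases h1 : s' = m x
        · exact Or.inr (Or.inl h1)
        obtain ⟨k1, k2, k3, _⟩ := lemA x s' hs' h1
        obtain ⟨_, _, _, hB⟩ := lemA s' x hs'.symm (fun h => k1 h.symm)
        rcases hB b hyb with h | h | h
        · -- b = s'
          rcases hE2 b hyb with h' | h' | h'
          · exact Or.inr (Or.inr (Or.inl (h ▸ h')))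
          · exact Or.inr (Or.inr (Or.inr (h ▸ h')))
          · exact absurd h' hbx
        · -- b = m s'
          rcases hE2 b hyb with h' | h' | h'
          · exact Or.inr (Or.inr (Or.inr (hmeq (h.symm.trans h')).symm))
          · exact Or.inr (Or.inr (Or.inl ((hmeq (h.symm.trans h')).symm.trans (hinv a))))
          · exact absurd h' hbx
        · exact absurd h hbx
      have hNa : ∀ t, G.Adj a t → P t := by
        intro s' hs'
        by_cases h1 : s' = m a
        · exact Or.inr (Or.inr (Or.inr h1))
        obtain ⟨k1, k2, k3, _⟩ := lemA a s' hs' h1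
        obtain ⟨_, _, _, hB⟩ := lemA s' a hs'.symm (fun h => k1 h.symm)
        rcases hB t₀ ht₀adj with h | h | h
        · rcases ht₀ with h' | h'
          · exact Or.inl (h ▸ h')
          · exact Or.inr (Or.inl (h ▸ h'))
        · rcases ht₀ with h' | h'
          · exact Or.inr (Or.inl (hmeq (h.symm.trans h')).symm)
          · exact Or.inl ((hmeq (h.symm.trans h')).symm.trans (hinv x))
        · exact absurd h ht₀a
      have hcl : ∀ u t, P u → G.Adj u t → P t := by
        intro u t hu hut
        rcases hu with rfl | rfl | rfl | rfl
        · exact hNx t hut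
        · exact hNy t hut
        · exact hNa t hut
        · exact hNw t hut
      have hall : ∀ r, P r := fun r =>
        walkClosed P hcl (hconn.preconnected x r) (Or.inl rfl)
      have hsub : (univ : Finset (Fin n)) ⊆ {x, m x, a, m a} := by
        intro r _
        simp only [Finset.mem_insert, Finset.mem_singleton]
        exact hall r
      have hcard4 : ({x, m x, a, m a} : Finset (Fin n)).card ≤ 4 := by
        have h1 := Finset.card_insert_le x ({m x, a, m a} : Finset (Fin n))
        have h2 := Finset.card_insert_le (m x) ({a, m a} : Finset (Fin n))
        have h3 := Finset.card_insert_le a ({m a} : Finset (Fin n))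
        simp only [Finset.card_singleton] at h3
        omega
      have := Finset.card_le_card hsub
      rw [Finset.card_univ, Fintype.card_fin] at this
      omega
  -- pendant predicate and the partition
  set pend : Fin n → Prop := fun x => ∀ t, G.Adj x t → t = m x with hpend
  set D : Finset (Fin n) := univ.filter pend with hDdef
  set H : Finset (Fin n) := univ.filter (fun x => ¬ pend x) with hHdef
  have hmemH : ∀ x : Fin n, x ∈ H ↔ ¬ pend x := by intro x; simp [hHdef]
  have hmemD : ∀ x : Fin n, x ∈ D ↔ pend x := by intro x; simp [hDdef]
  have hmHD : ∀ x ∈ H, m x ∈ D := by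
    intro x hx
    rw [hmemD]
    have hx' : ∃ a, G.Adj x a ∧ a ≠ m x := by
      by_contra hno
      push_neg at hno
      exact ((hmemH x).1 hx) fun t ht => hno t ht
    obtain ⟨a, ha1, ha2⟩ := hx'
    intro t ht
    rw [hinv]
    exact claim2 x ⟨a, ha1, ha2⟩ t ht
  have hmDH : ∀ p ∈ D, m p ∈ H := by
    intro p hp
    rw [hmemD] at hp
    rw [hmemH]
    intro hmp
    -- both pendants : component {p, m p}, contradiction with n ≥ 6
    have hcl : ∀ u t, (u = p ∨ u = m p) → G.Adj u t → (t = p ∨ t = m p) := by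
      intro u t hu hut
      rcases hu with rfl | rfl
      · exact Or.inr (hp t hut)
      · exact Or.inl ((hmp t hut).trans (hinv p))
    have hall : ∀ r, r = p ∨ r = m p := fun r =>
      walkClosed _ hcl (hconn.preconnected p r) (Or.inl rfl)
    have hsub : (univ : Finset (Fin n)) ⊆ {p, m p} := by
      intro r _
      simp only [Finset.mem_insert, Finset.mem_singleton]
      exact hall r
    have := Finset.card_le_card hsub
    rw [Finset.card_univ, Fintype.card_fin] at this
    have h2 := Finset.card_insert_le p ({m p} : Finset (Fin n))
    simp only [Finset.card_singleton] at h2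
    omega
  have hDHn : D.card + H.card = n := by
    rw [hDdef, hHdef]
    simpa using Finset.card_filter_add_card_filter_not (s := (univ : Finset (Fin n))) (p := pend)
  have hHleD : H.card ≤ D.card := by
    apply Finset.card_le_card_of_injOn m (fun x hx => hmHD x hx)
    intro x _ y _ hxy
    rw [← hinv x, hxy, hinv]
  have hHq : H.card ≤ q := by omega
  have hH1 : 1 ≤ H.card := by
    rcases Finset.eq_empty_or_nonempty H with he | ⟨x, hx⟩
    · exfalso
      have v0 : Fin n := ⟨0, by omega⟩
      have hv0 : v0 ∈ D := by
        by_contra hv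
        have : v0 ∈ H := by
          rw [hmemH]; rw [hmemD] at hv; exact hv
        simp [he] at this
      have := hmDH v0 hv0
      simp [he] at this
    · exact Finset.card_pos.2 ⟨x, hx⟩
  -- degrees
  have hdegD : ∀ p ∈ D, G.degree p = 1 := by
    intro p hp
    rw [hmemD] at hp
    have : G.neighborFinset p = {m p} := by
      ext t
      simp only [SimpleGraph.mem_neighborFinset, Finset.mem_singleton]
      exact ⟨fun h => hp t h, fun h => h ▸ hadjm p⟩
    rw [SimpleGraph.degree, this, Finset.card_singleton]
  have hnbsub : ∀ x ∈ H, G.neighborFinset x ⊆ insert (m x) (H.erase x) := by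
    intro x hx t ht
    rw [SimpleGraph.mem_neighborFinset] at ht
    by_cases hpt : pend t
    · have : x = m t := hpt x ht.symm
      exact Finset.mem_insert.2 (Or.inl (hmeq this.symm).symm)
    · exact Finset.mem_insert.2 (Or.inr (Finset.mem_erase.2 ⟨ht.ne', (hmemH t).2 hpt⟩))
  have hdegH : ∀ x ∈ H, G.degree x ≤ H.card := by
    intro x hx
    have h1 := Finset.card_le_card (hnbsub x hx)
    have h2 := Finset.card_insert_le (m x) (H.erase x)
    have h3 : (H.erase x).card = H.card - 1 := Finset.card_erase_of_mem hx
    rw [SimpleGraph.degree]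
    omega
  -- sum of degrees
  have hsplit : ∑ p ∈ D, G.degree p + ∑ x ∈ H, G.degree x = ∑ v, G.degree v := by
    rw [hDdef, hHdef]
    exact Finset.sum_filter_add_sum_filter_not _ _ _
  have hsumD : ∑ p ∈ D, G.degree p = D.card := by
    rw [Finset.sum_congr rfl hdegD, Finset.sum_const, smul_eq_mul, mul_one]
  have hsumH : ∑ x ∈ H, G.degree x ≤ H.card * H.card := by
    calc ∑ x ∈ H, G.degree x ≤ ∑ x ∈ H, H.card := Finset.sum_le_sum hdegH
    _ = H.card * H.card := by rw [Finset.sum_const, smul_eq_mul]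
  have hhandshake := SimpleGraph.sum_degrees_eq_twice_card_edges G
  have h2E : 2 * G.edgeFinset.card ≤ D.card + H.card * H.card := by
    omega
  have hC2 : 2 * ((q+1).choose 2) = q*q + q := by
    rw [Nat.choose_two_right]
    obtain ⟨k, hk⟩ := Nat.even_mul_succ_self q
    have h1 : (q+1) * (q+1-1) = q*q+q := by simp; ring
    have h2 : q*q+q = k+k := by rw [← hk]; ring
    rw [h1, h2]
    omega
  have hbound : 2 * G.edgeFinset.card ≤ q*q + q := by
    have hkey : H.card * H.card + D.card ≤ q*q + q := by
      zify
      nlinarith [mul_nonneg (by omega : (0:ℤ) ≤ (q:ℤ) - H.card)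
        (by omega : (0:ℤ) ≤ (q:ℤ) + H.card - 1), hDHn, hn]
    omega
  constructor
  · omega
  · -- equality case
    intro hEq
    have h2Eeq : 2 * G.edgeFinset.card = q*q + q := by omega
    have hHcq : H.card = q := by
      by_contra hne'
      have hlt : H.card < q := lt_of_le_of_ne hHq hne'
      have hkey : H.card * H.card + D.card < q*q + q := by
        zify
        nlinarith [mul_pos (by omega : (0:ℤ) < (q:ℤ) - H.card)
          (by omega : (0:ℤ) < (q:ℤ) + H.card - 1), hDHn, hn]
      omega
    have hsumHeq : ∑ x ∈ H, G.degree x = q * q := by omega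
    have hdegHeq : ∀ x ∈ H, G.degree x = q := by
      by_contra hne'
      push_neg at hne'
      obtain ⟨x0, hx0, hx0ne⟩ := hne'
      have hlt : G.degree x0 < q := lt_of_le_of_ne (hHcq ▸ hdegH x0 hx0) hx0ne
      have hslt : ∑ x ∈ H, G.degree x < ∑ _x ∈ H, q :=
        Finset.sum_lt_sum (fun i hi => hHcq ▸ hdegH i hi) ⟨x0, hx0, hlt⟩
      rw [Finset.sum_const, smul_eq_mul, hHcq] at hslt
      omega
    have hnbeq : ∀ x ∈ H, G.neighborFinset x = insert (m x) (H.erase x) := by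
      intro x hx
      apply Finset.eq_of_subset_of_card_le (hnbsub x hx)
      have h2 := Finset.card_insert_le (m x) (H.erase x)
      have h3 : (H.erase x).card = H.card - 1 := Finset.card_erase_of_mem hx
      have h4 : (G.neighborFinset x).card = q := hdegHeq x hx
      omega
    have hcomplete : ∀ x ∈ H, ∀ y ∈ H, x ≠ y → G.Adj x y := by
      intro x hx y hy hxy
      have hy' : y ∈ G.neighborFinset x := by
        rw [hnbeq x hx]
        exact Finset.mem_insert.2 (Or.inr (Finset.mem_erase.2 ⟨fun h => hxy h.symm, hy⟩))
      rw [SimpleGraph.mem_neighborFinset] at hy'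
      exact hy'
    have hpendAdj : ∀ y, pend y → ∀ x, (G.Adj x y ↔ x = m y) := by
      intro y hy x
      constructor
      · intro h; exact hy x h.symm
      · intro h; rw [h]; exact (hadjm y).symm
    have hDDadj : ∀ p, pend p → ∀ p', pend p' → ¬ G.Adj p p' := by
      intro p hp p' hp' hadj
      have h1 : p' = m p := hp p' hadj
      have h2 : m p ∈ H := hmDH p ((hmemD p).2 hp)
      rw [hmemH] at h2
      exact h2 (h1 ▸ hp')
    have hnotH : ∀ x : Fin n, x ∉ H → pend x := by
      intro x hx
      by_contra hp
      exact hx ((hmemH x).2 hp)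
    have hmxH : ∀ x : Fin n, x ∉ H → m x ∈ H :=
      fun x hx => hmDH x ((hmemD x).2 (hnotH x hx))
    -- target graph adjacency facts
    set rel : (Fin q ⊕ Fin q) → (Fin q ⊕ Fin q) → Prop := fun x y =>
      (∃ a b, x = Sum.inl a ∧ y = Sum.inl b) ∨ (∃ a, x = Sum.inl a ∧ y = Sum.inr a) with hrel
    have tInlInl : ∀ i j : Fin q, (SimpleGraph.fromRel rel).Adj (Sum.inl i) (Sum.inl j) ↔ i ≠ j := by
      intro i j
      rw [SimpleGraph.fromRel_adj]
      constructor
      · intro h hij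
        exact h.1 (by rw [hij])
      · intro h
        exact ⟨fun hc => h (Sum.inl.inj hc), Or.inl (Or.inl ⟨i, j, rfl, rfl⟩)⟩
    have tInlInr : ∀ i j : Fin q, (SimpleGraph.fromRel rel).Adj (Sum.inl i) (Sum.inr j) ↔ i = j := by
      intro i j
      rw [SimpleGraph.fromRel_adj]
      constructor
      · rintro ⟨hne, h | h⟩
        · rcases h with ⟨a, b, h1, h2⟩ | ⟨a, h1, h2⟩
          · exact absurd h2 (by simp)
          · exact (Sum.inl.inj h1).trans (Sum.inr.inj h2).symm
        · rcases h with ⟨a, b, h1, h2⟩ | ⟨a, h1, h2⟩ <;> simp at h1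
      · rintro rfl
        exact ⟨by simp, Or.inl (Or.inr ⟨i, rfl, rfl⟩)⟩
    have tInrInr : ∀ i j : Fin q, ¬ (SimpleGraph.fromRel rel).Adj (Sum.inr i) (Sum.inr j) := by
      intro i j h
      rw [SimpleGraph.fromRel_adj] at h
      obtain ⟨hne, h | h⟩ := h <;> rcases h with ⟨a, b, h1, h2⟩ | ⟨a, h1, h2⟩ <;> simp at h1 h2
    have tInrInl : ∀ i j : Fin q, (SimpleGraph.fromRel rel).Adj (Sum.inr j) (Sum.inl i) ↔ i = j := by
      intro i j
      rw [SimpleGraph.adj_comm]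
      exact tInlInr i j
    -- build the isomorphism
    let eH : {x // x ∈ H} ≃ Fin q := H.equivFinOfCardEq hHcq
    refine ⟨⟨⟨fun x => if hx : x ∈ H then Sum.inl (eH ⟨x, hx⟩) else Sum.inr (eH ⟨m x, hmxH x hx⟩),
      Sum.elim (fun i => ((eH.symm i : {x // x ∈ H}) : Fin n))
        (fun i => m ((eH.symm i : {x // x ∈ H}) : Fin n)), ?_, ?_⟩, ?_⟩⟩
    · -- left inverse
      intro x
      dsimp only
      by_cases hx : x ∈ H
      · rw [dif_pos hx]
        simp only [Sum.elim_inl, Equiv.symm_apply_apply]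
      · rw [dif_neg hx]
        simp only [Sum.elim_inr, Equiv.symm_apply_apply]
        exact hinv x
    · -- right inverse
      rintro (i | i)
      · dsimp only
        simp only [Sum.elim_inl]
        simp only [(eH.symm i).2, ↓reduceDIte]
        congr 1
        rw [show (⟨((eH.symm i : {x // x ∈ H}) : Fin n), (eH.symm i).2⟩ : {x // x ∈ H}) = eH.symm i from Subtype.ext rfl]
        exact Equiv.apply_symm_apply eH i
      · dsimp only
        simp only [Sum.elim_inr]
        have hmp : m ((eH.symm i : {x // x ∈ H}) : Fin n) ∉ H := by
          intro hcontra
          rw [hmemH] at hcontra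
          exact hcontra ((hmemD _).1 (hmHD _ (eH.symm i).2))
        simp only [hmp, ↓reduceDIte]
        congr 1
        have hsub : (⟨m (m ((eH.symm i : {x // x ∈ H}) : Fin n)), hmxH _ hmp⟩ : {x // x ∈ H}) = eH.symm i := by
          apply Subtype.ext
          simp only [hinv]
        rw [hsub]
        exact Equiv.apply_symm_apply eH i
    · -- map_rel_iff'
      intro a b
      simp only [Equiv.coe_fn_mk]
      by_cases ha : a ∈ H <;> by_cases hb : b ∈ H
      · rw [dif_pos ha, dif_pos hb, tInlInl]
        constructor
        · intro h
          exact hcomplete a ha b hb (fun hab => h (congrArg eH (Subtype.ext hab)))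
        · intro h hc
          exact h.ne (congrArg Subtype.val (eH.injective hc))
      · rw [dif_pos ha, dif_neg hb, tInlInr]
        rw [hpendAdj b (hnotH b hb) a]
        constructor
        · intro h
          have : (⟨a, ha⟩ : {x // x ∈ H}) = ⟨m b, hmxH b hb⟩ := eH.injective h
          exact congrArg Subtype.val this
        · intro h
          exact congrArg eH (Subtype.ext h)
      · rw [dif_neg ha, dif_pos hb, tInrInl]
        rw [show G.Adj a b ↔ G.Adj b a from SimpleGraph.adj_comm _ _ _]
        rw [hpendAdj a (hnotH a ha) b]
        constructor
        · intro h
          have : (⟨b, hb⟩ : {x // x ∈ H}) = ⟨m a, hmxH a ha⟩ := eH.injective h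
          exact congrArg Subtype.val this
        · intro h
          exact congrArg eH (Subtype.ext h)
      · rw [dif_neg ha, dif_neg hb]
        constructor
        · intro h
          exact absurd h (tInrInr _ _)
        · intro h
          exact absurd h (hDDadj a (hnotH a ha) b (hnotH b hb))
end

section
/- Let q ≥ 3 and n = 2q. If F ⊆ C([n],2) is a non-trivial union-q-efficient family (viewing 2-sets as edges of a graph covering all of [n]), then |F| ≤ C(q+1,2). -/
/-!
By efficiency `F` contains a perfect matching, which we record as a fixed-point-free involution
`P` with `{v, P v} ∈ F` for all `v`. If `{u, v} ∈ F` with `v ≠ P u`, then every edge at `P u`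
other than `{u, P u}` is `{P u, P v}`: for any other edge `{P u, w}`, exchanging `{u, P u}` in the
matching for `{u, v}` and `{P u, w}` yields a covering subfamily without a perfect matching.
Consequently the cross neighbours of `u` (those other than `P u`) contain no matched pair, so there
are at most `q - 1` of them, and if both `u` and `P u` have cross neighbours then each has at most
one. Thus `deg u + deg (P u) ≤ q + 1`; summing over all vertices gives `4 |F| ≤ 2 q (q + 1)`.
-/

open Finset

namespace UnionEfficient

variable {α : Type*}

def IsExactCover (G : Finset (Finset α)) : Prop :=
  ∀ v, ∃! A, A ∈ G ∧ v ∈ A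

lemma IsExactCover.eq_of_mem {G : Finset (Finset α)} (hG : IsExactCover G) {A B : Finset α}
    {v : α} (hA : A ∈ G) (hB : B ∈ G) (hvA : v ∈ A) (hvB : v ∈ B) : A = B :=
  (hG v).unique ⟨hA, hvA⟩ ⟨hB, hvB⟩

variable [DecidableEq α]

lemma ne_of_pair_mem {F : Finset (Finset α)} (hF : ∀ A ∈ F, #A = 2) {a b : α}
    (h : {a, b} ∈ F) : a ≠ b := by
  rintro rfl
  simpa using hF _ h

lemma exists_eq_pair_of_mem {A : Finset α} (hA : #A = 2) {v : α} (hv : v ∈ A) :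
    ∃ w, A = {v, w} := by
  obtain ⟨x, y, -, rfl⟩ := card_eq_two.1 hA
  simp only [mem_insert, mem_singleton] at hv
  rcases hv with rfl | rfl
  · exact ⟨y, rfl⟩
  · exact ⟨x, pair_comm _ _⟩

lemma sum_card_filter_mem [Fintype α] (G : Finset (Finset α)) :
    ∑ v, #{A ∈ G | v ∈ A} = ∑ A ∈ G, #A := by
  simp_rw [card_eq_sum_ones, sum_filter]
  rw [sum_comm]
  simp

lemma isExactCover_of_card_eq [Fintype α] {G : Finset (Finset α)} (hG : ∀ A ∈ G, #A = 2)
    (hcard : Fintype.card α = 2 * #G) (hcov : G.sup id = univ) : IsExactCover G := by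
  have hpos : ∀ v, 1 ≤ #{A ∈ G | v ∈ A} := fun v => by
    obtain ⟨A, hA, hvA⟩ := mem_sup.1 (hcov ▸ mem_univ v)
    exact card_pos.2 ⟨A, mem_filter.2 ⟨hA, hvA⟩⟩
  have hsum : ∑ _v : α, 1 = ∑ v, #{A ∈ G | v ∈ A} := by
    rw [sum_card_filter_mem, sum_congr rfl hG, sum_const, card_univ, hcard]
    simp [mul_comm]
  intro v
  obtain ⟨A, hA⟩ := card_eq_one.1
    ((sum_eq_sum_iff_of_le fun v _ => hpos v).1 hsum v (mem_univ v)).symm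
  refine ⟨A, mem_filter.1 (hA ▸ mem_singleton_self A), fun B hB => ?_⟩
  have hBA := hA ▸ mem_filter.2 hB
  simpa using hBA

lemma exists_involutive_pair_mem {M : Finset (Finset α)} (hM : IsExactCover M)
    (hM₂ : ∀ A ∈ M, #A = 2) :
    ∃ P : α → α, Function.Involutive P ∧ ∀ v, {v, P v} ∈ M := by
  have hpair : ∀ v, ∃ w, {v, w} ∈ M := fun v => by
    obtain ⟨A, hA, hvA⟩ := (hM v).exists
    obtain ⟨w, rfl⟩ := exists_eq_pair_of_mem (hM₂ A hA) hvA
    exact ⟨w, hA⟩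
  choose P hP using hpair
  refine ⟨P, fun v => ?_, hP⟩
  have hsame : {P v, P (P v)} = ({v, P v} : Finset α) :=
    hM.eq_of_mem (v := P v) (hP (P v)) (hP v) (by simp) (by simp)
  have hne : P v ≠ P (P v) := ne_of_pair_mem hM₂ (hP (P v))
  have hmem : P (P v) ∈ ({v, P v} : Finset α) := hsame ▸ by simp
  simp only [mem_insert, mem_singleton] at hmem
  exact hmem.resolve_right hne.symm

section Efficient

variable [Fintype α] {F : Finset (Finset α)} {P : α → α}

/-- For families of `2`-sets on `2 q` points this is union-`q`-efficiency. -/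
def IsUnionEfficient (F : Finset (Finset α)) : Prop :=
  ∀ H ⊆ F, H.sup id = univ → ∃ G ⊆ H, IsExactCover G

def neighbors (F : Finset (Finset α)) (v : α) : Finset α := {w | {v, w} ∈ F}

@[simp]
lemma mem_neighbors {v w : α} : w ∈ neighbors F v ↔ {v, w} ∈ F := by
  simp [neighbors]

lemma card_neighbors (hF : ∀ A ∈ F, #A = 2) (v : α) :
    #(neighbors F v) = #{A ∈ F | v ∈ A} := by
  refine card_nbij (fun w => {v, w}) (fun w hw => ?_) (fun w hw w' hw' h => ?_) (fun A hA => ?_)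
  · simpa using mem_neighbors.1 hw
  · have hw'' : w' ∈ ({v, w} : Finset α) := by
      rw [show ({v, w} : Finset α) = {v, w'} from h]; simp
    simp only [mem_insert, mem_singleton] at hw''
    exact (hw''.resolve_left (ne_of_pair_mem hF (mem_neighbors.1 hw')).symm).symm
  · obtain ⟨hAF, hvA⟩ := mem_filter.1 (mem_coe.1 hA)
    obtain ⟨w, rfl⟩ := exists_eq_pair_of_mem (hF A hAF) hvA
    exact ⟨w, by simpa using hAF, rfl⟩

lemma eq_or_eq_of_pair_mem_of_ne_partner (hF : ∀ A ∈ F, #A = 2) (hP : ∀ v, {v, P v} ∈ F)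
    (hPP : Function.Involutive P) (heff : IsUnionEfficient F) {u v w : α}
    (huv : {u, v} ∈ F) (hvu : v ≠ P u) (hw : {P u, w} ∈ F) : w = u ∨ w = P v := by
  by_contra! ⟨hwu, hwv⟩
  have huv' : u ≠ v := ne_of_pair_mem hF huv
  have hPu : P u ≠ u := (ne_of_pair_mem hF (hP u)).symm
  have hPv : P v ≠ v := (ne_of_pair_mem hF (hP v)).symm
  set H : Finset (Finset α) := insert {u, v} (insert {P u, w}
    (((univ.erase u).erase (P u)).image fun x => {x, P x}))
  have hHF : H ⊆ F := by
    intro B hB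
    simp only [H, mem_insert, mem_image] at hB
    rcases hB with rfl | rfl | ⟨x, -, rfl⟩
    exacts [huv, hw, hP x]
  have hHcov : H.sup id = univ := by
    refine eq_univ_of_forall fun x => mem_sup.2 ?_
    by_cases hxu : x = u
    · exact ⟨{u, v}, by simp [H], by simp [hxu]⟩
    by_cases hxPu : x = P u
    · exact ⟨{P u, w}, by simp [H], by simp [hxPu]⟩
    refine ⟨{x, P x}, mem_insert_of_mem (mem_insert_of_mem (mem_image_of_mem _ ?_)), by simp⟩
    simp [hxu, hxPu]
  obtain ⟨G, hGH, hG⟩ := heff H hHF hHcov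
  have huvG : {u, v} ∈ G := by
    obtain ⟨B, hBG, huB⟩ := (hG u).exists
    have hBH := hGH hBG
    simp only [H, mem_insert, mem_image, mem_erase, mem_univ] at hBH
    rcases hBH with rfl | rfl | ⟨x, ⟨hxPu, hxu, -⟩, rfl⟩
    · exact hBG
    · simp [hPu.symm, hwu.symm] at huB
    · simp only [mem_insert, mem_singleton] at huB
      rcases huB with rfl | rfl
      exacts [absurd rfl hxu, absurd (hPP x).symm hxPu]
  have hvG : {v, P v} ∈ G := by
    obtain ⟨B, hBG, hB⟩ := (hG (P v)).exists
    have hBH := hGH hBG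
    simp only [H, mem_insert, mem_image, mem_erase, mem_univ] at hBH
    rcases hBH with rfl | rfl | ⟨x, -, rfl⟩ <;> simp only [mem_insert, mem_singleton] at hB
    · rcases hB with h | h
      exacts [absurd (h ▸ (hPP v).symm) hvu, absurd h hPv]
    · rcases hB with h | h
      exacts [absurd (hPP.injective h) (Ne.symm huv'), absurd h.symm hwv]
    · rcases hB with rfl | h
      · rwa [hPP, pair_comm] at hBG
      · rwa [← hPP.injective h] at hBG
  have hsame : ({u, v} : Finset α) = {v, P v} :=
    hG.eq_of_mem (v := v) huvG hvG (by simp) (by simp)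
  have hu : u ∈ ({v, P v} : Finset α) := hsame ▸ mem_insert_self u {v}
  simp only [mem_insert, mem_singleton] at hu
  rcases hu with h | h
  exacts [huv' h, hvu (h ▸ (hPP v).symm)]

def crossNeighbors (F : Finset (Finset α)) (P : α → α) (v : α) : Finset α :=
  (neighbors F v).erase (P v)

lemma mem_crossNeighbors {v w : α} :
    w ∈ crossNeighbors F P v ↔ w ≠ P v ∧ {v, w} ∈ F := by
  simp [crossNeighbors]

lemma crossNeighbors_partner_subset (hF : ∀ A ∈ F, #A = 2) (hP : ∀ v, {v, P v} ∈ F)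
    (hPP : Function.Involutive P) (heff : IsUnionEfficient F) {u x : α}
    (hx : x ∈ crossNeighbors F P u) : crossNeighbors F P (P u) ⊆ {P x} := by
  intro w hw
  rw [mem_crossNeighbors, hPP u] at hw
  rw [mem_crossNeighbors] at hx
  exact mem_singleton.2
    ((eq_or_eq_of_pair_mem_of_ne_partner hF hP hPP heff hx.2 hx.1 hw.2).resolve_left hw.1)

lemma card_crossNeighbors_le {q : ℕ} (hcard : Fintype.card α = 2 * q) (hF : ∀ A ∈ F, #A = 2)
    (hP : ∀ v, {v, P v} ∈ F) (hPP : Function.Involutive P) (heff : IsUnionEfficient F)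
    (u : α) : #(crossNeighbors F P u) ≤ q - 1 := by
  set C := crossNeighbors F P u
  set S := (univ.erase u).erase (P u)
  have hCS : C ⊆ S := fun x hx => by
    rw [mem_crossNeighbors] at hx
    simpa [S, hx.1] using (ne_of_pair_mem hF hx.2).symm
  have hPCS : C.image P ⊆ S := by
    simp only [subset_iff, mem_image, forall_exists_index, and_imp]
    rintro _ x hx rfl
    rw [mem_crossNeighbors] at hx
    simp only [S, mem_erase, mem_univ, and_true, hPP.injective.ne_iff]
    refine ⟨(ne_of_pair_mem hF hx.2).symm, fun h => hx.1 ?_⟩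
    rw [← h, hPP]
  -- `x, P x ∈ C` would make `u` a cross neighbour of both `x` and `P x`.
  have hdisj : Disjoint C (C.image P) := by
    refine disjoint_left.2 fun x hx hPx => ?_
    obtain ⟨y, hy, rfl⟩ := mem_image.1 hPx
    obtain ⟨hyPu, huy⟩ := mem_crossNeighbors.1 hy
    obtain ⟨-, huPy⟩ := mem_crossNeighbors.1 hx
    have hu : u ∈ crossNeighbors F P y :=
      mem_crossNeighbors.2 ⟨fun h => hyPu (h ▸ (hPP y).symm), pair_comm u y ▸ huy⟩
    have hu' : u ∈ crossNeighbors F P (P y) :=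
      mem_crossNeighbors.2 ⟨by rw [hPP]; exact ne_of_pair_mem hF huy,
        pair_comm u (P y) ▸ huPy⟩
    exact ne_of_pair_mem hF (hP u)
      (mem_singleton.1 (crossNeighbors_partner_subset hF hP hPP heff hu hu'))
  have hcardS : #S = 2 * q - 2 := by
    have hPu : P u ∈ univ.erase u := mem_erase.2 ⟨(ne_of_pair_mem hF (hP u)).symm, mem_univ _⟩
    rw [card_erase_of_mem hPu, card_erase_of_mem (mem_univ u), card_univ, hcard]
    omega
  have := card_le_card (union_subset hCS hPCS)
  rw [card_union_of_disjoint hdisj, card_image_of_injective _ hPP.injective, hcardS] at this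
  omega

lemma card_neighbors_add_card_neighbors_partner_le {q : ℕ} (hq : 3 ≤ q)
    (hcard : Fintype.card α = 2 * q) (hF : ∀ A ∈ F, #A = 2) (hP : ∀ v, {v, P v} ∈ F)
    (hPP : Function.Involutive P) (heff : IsUnionEfficient F) (u : α) :
    #(neighbors F u) + #(neighbors F (P u)) ≤ q + 1 := by
  have hsplit : ∀ v, #(neighbors F v) = #(crossNeighbors F P v) + 1 := fun v =>
    (card_erase_add_one (mem_neighbors.2 (hP v))).symm
  have hbound := card_crossNeighbors_le hcard hF hP hPP heff
  suffices #(crossNeighbors F P u) + #(crossNeighbors F P (P u)) ≤ q - 1 by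
    rw [hsplit, hsplit]; omega
  rcases (crossNeighbors F P u).eq_empty_or_nonempty with h | ⟨x, hx⟩
  · simpa [h] using hbound (P u)
  rcases (crossNeighbors F P (P u)).eq_empty_or_nonempty with h | ⟨y, hy⟩
  · simpa [h] using hbound u
  have hu := card_le_card (crossNeighbors_partner_subset hF hP hPP heff hy)
  have hPu := card_le_card (crossNeighbors_partner_subset hF hP hPP heff hx)
  rw [hPP, card_singleton] at hu
  rw [card_singleton] at hPu
  omega

lemma card_le_choose_two {q : ℕ} (hq : 3 ≤ q) (hcard : Fintype.card α = 2 * q)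
    (hF : ∀ A ∈ F, #A = 2) (hP : ∀ v, {v, P v} ∈ F) (hPP : Function.Involutive P)
    (heff : IsUnionEfficient F) : #F ≤ (q + 1).choose 2 := by
  have hdeg : ∑ v, #(neighbors F v) = 2 * #F := by
    simp_rw [card_neighbors hF, sum_card_filter_mem, sum_congr rfl hF, sum_const, smul_eq_mul,
      mul_comm]
  have hswap : ∑ v, #(neighbors F (P v)) = ∑ v, #(neighbors F v) :=
    Equiv.sum_comp hPP.toPerm fun v => #(neighbors F v)
  have hsum : ∑ v, (#(neighbors F v) + #(neighbors F (P v))) ≤ ∑ _v : α, (q + 1) :=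
    sum_le_sum fun u _ => card_neighbors_add_card_neighbors_partner_le hq hcard hF hP hPP heff u
  rw [sum_add_distrib, hswap, hdeg, sum_const, card_univ, hcard, smul_eq_mul] at hsum
  rw [Nat.choose_two_right, Nat.add_sub_cancel, Nat.le_div_iff_mul_le two_pos]
  nlinarith

end Efficient

end UnionEfficient

open UnionEfficient

/-- Let `n = 2q`, `q ≥ 3`. A non-trivial union-`q`-efficient family of `2`-sets
`F ⊆ C([n],2)` has at most `C(q+1,2)` members. -/
theorem stmt5 (q n : ℕ) (hq : 3 ≤ q) (hn : n = 2 * q)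
    (F : Finset (Finset (Fin n))) (hF : ∀ A ∈ F, A.card = 2)
    (hnontriv : F.sup id = Finset.univ)
    (heff : ∀ F' ⊆ F, F'.sup id = Finset.univ →
      ∃ G ⊆ F', G.card = q ∧ G.sup id = Finset.univ) :
    F.card ≤ (q + 1).choose 2 := by
  have heff' : IsUnionEfficient F := fun H hHF hH => by
    obtain ⟨G, hGH, hGq, hG⟩ := heff H hHF hH
    refine ⟨G, hGH, isExactCover_of_card_eq (fun A hA => hF A (hHF (hGH hA))) ?_ hG⟩
    rw [Fintype.card_fin, hGq, hn]
  obtain ⟨M, hMF, hM⟩ := heff' F Subset.rfl hnontriv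
  obtain ⟨P, hPP, hP⟩ := exists_involutive_pair_mem hM fun A hA => hF A (hMF hA)
  exact card_le_choose_two hq ((Fintype.card_fin n).trans hn) hF (fun v => hMF (hP v)) hPP heff'
end

section
/- Let n = qk with k ≥ 3. If F ⊆ C([n],k) is non-trivial and union-q-efficient, then for every j ∈ [n], |F(j)| ≤ C(|X(j)|−2, k−1) + 1, where F(j) is the subfamily of sets containing j and X(j) is the union of those sets. -/
/-!
If `q` sets of size `k` cover a set of size `n = qk`, they partition it. Union-efficiency applied
to `F` itself yields such a partition `G ⊆ F`; let `A₀ ∈ G` be its block through `j`. If every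
point of `A₀` lay in another member of `F(j)`, then `(G \ {A₀}) ∪ (F(j) \ {A₀})` would cover, so it
would contain a partition `G'`. The block `B ∋ j` of `G'` comes from `F(j) \ {A₀}`, and all other
blocks of `G'` avoid `j`, so they come from `G \ {A₀}`; hence `G'` covers `A₀` by `B` alone, and
`A₀ = B` as both have size `k`, a contradiction. So some `y ∈ A₀` lies in no other member of
`F(j)`, and `A ↦ A \ {j}` embeds `F(j) \ {A₀}` into the `(k - 1)`-subsets of `X(j) \ {j, y}`.
-/

open Finset

variable {α : Type*} [DecidableEq α]

def UnionEfficient [Fintype α] (q : ℕ) (F : Finset (Finset α)) : Prop :=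
  ∀ F' ⊆ F, F'.sup id = univ → ∃ G ⊆ F', #G = q ∧ G.sup id = univ

namespace Finset

theorem pairwiseDisjoint_of_sum_card_le_card_sup {s : Finset (Finset α)}
    (h : ∑ A ∈ s, #A ≤ #(s.sup id)) : (s : Set (Finset α)).PairwiseDisjoint id := by
  intro A hA B hB hAB
  rw [Function.onFun, id, id, disjoint_left]
  intro x hxA hxB
  have hsup : s.sup id = A ∪ (s.erase A).sup id := by
    nth_rw 1 [← insert_erase hA]
    exact sup_insert
  have hU : #((s.erase A).sup id) ≤ ∑ C ∈ s.erase A, #C := by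
    rw [sup_eq_biUnion]
    exact card_biUnion_le
  have hinter : 0 < #(A ∩ (s.erase A).sup id) :=
    card_pos.2 ⟨x, mem_inter.2 ⟨hxA, mem_sup.2 ⟨B, mem_erase.2 ⟨Ne.symm hAB, hB⟩, hxB⟩⟩⟩
  have hunion := card_union_add_card_inter A ((s.erase A).sup id)
  have hsum := add_sum_erase s card hA
  rw [hsup] at h
  omega

theorem subset_of_erase_subset_erase {G G' : Finset (Finset α)} {A B : Finset α}
    (hG : (G : Set (Finset α)).PairwiseDisjoint id) (hA : A ∈ G) (hcov : A ⊆ G'.sup id)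
    (hsub : G'.erase B ⊆ G.erase A) : A ⊆ B := by
  intro y hy
  obtain ⟨C, hC, hyC⟩ := mem_sup.1 (hcov hy)
  by_contra hyB
  have hCB : C ≠ B := by
    rintro rfl
    exact hyB hyC
  obtain ⟨hCA, hCG⟩ := mem_erase.1 (hsub (mem_erase.2 ⟨hCB, hC⟩))
  exact hCA (hG.elim_finset hCG hA y hyC hy)

theorem card_le_choose_card_sup_sub_two_add_one {𝒜 : Finset (Finset α)} {A₀ : Finset α}
    {k : ℕ} {j y : α} (h𝒜 : ∀ A ∈ 𝒜, #A = k) (hj : ∀ A ∈ 𝒜, j ∈ A) (hA₀ : A₀ ∈ 𝒜)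
    (hy : y ∈ A₀) (hprivate : ∀ A ∈ 𝒜, y ∈ A → A = A₀) :
    #𝒜 ≤ (#(𝒜.sup id) - 2).choose (k - 1) + 1 := by
  rw [← card_erase_add_one hA₀]
  rcases (𝒜.erase A₀).eq_empty_or_nonempty with hempty | ⟨B, hB⟩
  · rw [hempty, card_empty]
    omega
  have hyj : y ≠ j := by
    rintro rfl
    obtain ⟨hBA₀, hB𝒜⟩ := mem_erase.1 hB
    exact hBA₀ (hprivate B hB𝒜 (hj B hB𝒜))
  have hX : #(((𝒜.sup id).erase j).erase y) = #(𝒜.sup id) - 2 := by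
    rw [card_erase_of_mem (mem_erase.2 ⟨hyj, mem_sup.2 ⟨A₀, hA₀, hy⟩⟩),
      card_erase_of_mem (mem_sup.2 ⟨A₀, hA₀, hj A₀ hA₀⟩)]
    omega
  have hmaps : Set.MapsTo (erase · j) (𝒜.erase A₀)
      (powersetCard (k - 1) (((𝒜.sup id).erase j).erase y)) := by
    intro A hA
    obtain ⟨hAA₀, hA𝒜⟩ := mem_erase.1 hA
    refine mem_powersetCard.2 ⟨fun x hx => ?_, by rw [card_erase_of_mem (hj A hA𝒜), h𝒜 A hA𝒜]⟩
    obtain ⟨hxj, hxA⟩ := mem_erase.1 hx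
    have hxy : x ≠ y := by
      rintro rfl
      exact hAA₀ (hprivate A hA𝒜 hxA)
    exact mem_erase.2 ⟨hxy, mem_erase.2 ⟨hxj, mem_sup.2 ⟨A, hA𝒜, hxA⟩⟩⟩
  have hinj : Set.InjOn (erase · j) (𝒜.erase A₀) :=
    (erase_injOn' j).mono fun A hA => hj A (mem_of_mem_erase hA)
  have hcard := card_le_card_of_injOn _ hmaps hinj
  rw [card_powersetCard, hX] at hcard
  omega

end Finset

section UnionEfficient

variable [Fintype α] {q k : ℕ}

theorem pairwiseDisjoint_of_card_mul_eq {G : Finset (Finset α)} (hα : Fintype.card α = q * k)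
    (hG : ∀ A ∈ G, #A = k) (hGq : #G = q) (hcov : G.sup id = univ) :
    (G : Set (Finset α)).PairwiseDisjoint id := by
  refine pairwiseDisjoint_of_sum_card_le_card_sup ?_
  rw [sum_congr rfl hG, sum_const, smul_eq_mul, hGq, hcov, card_univ, hα]

theorem UnionEfficient.exists_private_point {F G : Finset (Finset α)} {A₀ : Finset α} {j : α}
    (heff : UnionEfficient q F) (hα : Fintype.card α = q * k) (hF : ∀ A ∈ F, #A = k)
    (hGF : G ⊆ F) (hGq : #G = q) (hG : G.sup id = univ) (hA₀ : A₀ ∈ G) (hj : j ∈ A₀) :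
    ∃ y ∈ A₀, ∀ B ∈ F, j ∈ B → y ∈ B → B = A₀ := by
  by_contra! hcover
  have hGdisj := pairwiseDisjoint_of_card_mul_eq hα (fun A hA => hF A (hGF hA)) hGq hG
  set F' := G.erase A₀ ∪ (F.filter (j ∈ ·)).erase A₀
  have hF'F : F' ⊆ F := by
    intro C hC
    rcases mem_union.1 hC with hC | hC
    · exact hGF (mem_of_mem_erase hC)
    · exact (mem_filter.1 (mem_of_mem_erase hC)).1
  have hF'cov : F'.sup id = univ := by
    refine eq_univ_of_forall fun x => mem_sup.2 ?_
    by_cases hxA₀ : x ∈ A₀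
    · obtain ⟨B, hBF, hjB, hxB, hBA₀⟩ := hcover x hxA₀
      exact ⟨B, mem_union_right _ (mem_erase.2 ⟨hBA₀, mem_filter.2 ⟨hBF, hjB⟩⟩), hxB⟩
    · obtain ⟨C, hCG, hxC⟩ := mem_sup.1 (hG ▸ mem_univ x)
      have hCA₀ : C ≠ A₀ := by
        rintro rfl
        exact hxA₀ hxC
      exact ⟨C, mem_union_left _ (mem_erase.2 ⟨hCA₀, hCG⟩), hxC⟩
  obtain ⟨G', hG'F', hG'q, hG'⟩ := heff F' hF'F hF'cov
  have hG'disj := pairwiseDisjoint_of_card_mul_eq hα (fun A hA => hF A (hF'F (hG'F' hA))) hG'q hG'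
  obtain ⟨B, hBG', hjB⟩ := mem_sup.1 (hG' ▸ mem_univ j)
  have hA₀F' : A₀ ∉ F' := by simp [F']
  have hBA₀ : B ≠ A₀ := ne_of_mem_of_not_mem (hG'F' hBG') hA₀F'
  have hsub : G'.erase B ⊆ G.erase A₀ := by
    intro C hC
    obtain ⟨hCB, hCG'⟩ := mem_erase.1 hC
    rcases mem_union.1 (hG'F' hCG') with hC | hC
    · exact hC
    · have hjC := (mem_filter.1 (mem_of_mem_erase hC)).2
      exact absurd (hG'disj.elim_finset hCG' hBG' j hjC hjB) hCB
  have hA₀B := subset_of_erase_subset_erase hGdisj hA₀ (hG' ▸ subset_univ A₀) hsub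
  exact hBA₀ (eq_of_subset_of_card_le hA₀B (by rw [hF A₀ (hGF hA₀), hF B (hF'F (hG'F' hBG'))])).symm

end UnionEfficient

theorem stmt7_general (q k n : ℕ) (hn : n = q * k)
    (F : Finset (Finset (Fin n))) (hF : ∀ A ∈ F, A.card = k)
    (hnontriv : F.sup id = Finset.univ)
    (heff : ∀ F' ⊆ F, F'.sup id = Finset.univ →
      ∃ G ⊆ F', G.card = q ∧ G.sup id = Finset.univ)
    (j : Fin n) :
    (F.filter (fun A => j ∈ A)).card ≤
      (((F.filter (fun A => j ∈ A)).sup id).card - 2).choose (k - 1) + 1 := by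
  have hα : Fintype.card (Fin n) = q * k := by rw [Fintype.card_fin, hn]
  obtain ⟨G, hGF, hGq, hG⟩ := heff F subset_rfl hnontriv
  obtain ⟨A₀, hA₀G, hjA₀⟩ := mem_sup.1 (hG ▸ mem_univ j)
  obtain ⟨y, hyA₀, hprivate⟩ :=
    UnionEfficient.exists_private_point heff hα hF hGF hGq hG hA₀G hjA₀
  exact card_le_choose_card_sup_sub_two_add_one (fun A hA => hF A (mem_filter.1 hA).1)
    (fun A hA => (mem_filter.1 hA).2) (mem_filter.2 ⟨hGF hA₀G, hjA₀⟩) hyA₀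
    fun A hA hyA => hprivate A (mem_filter.1 hA).1 (mem_filter.1 hA).2 hyA

/-- Let `n = qk`, `k ≥ 3`, and `F ⊆ C([n],k)` non-trivial union-`q`-efficient.
Then for every `j`, `|F(j)| ≤ C(|X(j)|-2, k-1) + 1`, where `F(j)` is the
subfamily of sets containing `j` and `X(j)` their union. -/
theorem stmt7 (q k n : ℕ) (hk : 3 ≤ k) (hn : n = q * k)
    (F : Finset (Finset (Fin n))) (hF : ∀ A ∈ F, A.card = k)
    (hnontriv : F.sup id = Finset.univ)
    (heff : ∀ F' ⊆ F, F'.sup id = Finset.univ →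
      ∃ G ⊆ F', G.card = q ∧ G.sup id = Finset.univ)
    (j : Fin n) :
    (F.filter (fun A => j ∈ A)).card ≤
      (((F.filter (fun A => j ∈ A)).sup id).card - 2).choose (k - 1) + 1 :=
  stmt7_general q k n hn F hF hnontriv heff j
end

section
/- Let q ≥ 4 and n ≥ 3q. If G is a graph on n vertices with radius 2 such that for every pair of vertices u, v the common neighborhood N(u) ∩ N(v) contains a clique on q−2 vertices, then G has at least (q−1)n − C(q,2) edges. -/
/-!
Write `k = q - 2` and let `w` be a vertex of minimum degree `δ`, `A = N(w)` and `O` the set of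
vertices outside `N[w]`. Counting degrees around `w` gives
`2e = 2δ + ∑_{v ∈ A} d_A(v) + ∑_{x ∈ O} (d_A(x) + d(x))`, and since the common `k`-clique of `w`
and any other vertex lies in `A`, every `d_A` is at least `k`. This already gives the bound
unless `δ ∈ {k + 1, k + 2}` (a graph without dominating vertex has `δ ≥ k + 1`).

If `δ = k + 1`, every neighbourhood of size `k + 1` is a clique. The only vertices `x ∈ O` with
`d_A(x) + d(x) < 2(k + 1)` have a single neighbour in `O`, and that neighbour gains at least `k`
further neighbours in `O` (one non-neighbour of each vertex of `N(x) ∩ A`), which pays for them.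

If `δ = k + 2`, the non-edges inside `A` form a matching, and the bound fails only if there are
two of them. Each common clique of `w` and a vertex of `O` then misses one end of each, so for
`k ≥ 3` any other vertex of `A` would dominate `G`. For `k = 2` equality would force every vertex
of `O` to have exactly two neighbours in `O` and two adjacent ones in `A`; two vertices of `O`
with disjoint neighbourhoods in `A` must exist, and their common `2`-clique would give a vertex
three neighbours in `O`.
-/

open Finset

namespace SimpleGraph

lemma sdiff_subset_of_isNClique {V : Type*} [DecidableEq V] {G : SimpleGraph V} {k : ℕ}
    {S A : Finset V} {a b c d : V} (hS : G.IsNClique k S)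
    (hSA : S ⊆ A) (hA : #A = k + 2) (hab : Gᶜ.Adj a b) (hcd : Gᶜ.Adj c d)
    (habcd : {a, b} ∪ {c, d} ⊆ A) (hdisj : Disjoint ({a, b} : Finset V) {c, d}) :
    A \ S ⊆ {a, b} ∪ {c, d} := by
  have hmiss : ∀ {e e'}, Gᶜ.Adj e e' → ∃ z ∈ ({e, e'} : Finset V), z ∉ S := by
    intro e e' hee'
    by_contra! h
    exact ((compl_adj G e e').1 hee').2 <|
      hS.isClique (h e (by simp)) (h e' (by simp)) ((compl_adj G e e').1 hee').1
  obtain ⟨e₁, he₁, he₁S⟩ := hmiss hab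
  obtain ⟨e₂, he₂, he₂S⟩ := hmiss hcd
  have hsub : {e₁, e₂} ⊆ A \ S := by
    intro z hz
    rcases mem_insert.1 hz with rfl | hz
    · exact mem_sdiff.2 ⟨habcd (mem_union_left _ he₁), he₁S⟩
    · rw [mem_singleton.1 hz]
      exact mem_sdiff.2 ⟨habcd (mem_union_right _ he₂), he₂S⟩
  have hcard : #(A \ S) ≤ #({e₁, e₂} : Finset V) := by
    have hne : e₁ ≠ e₂ := by
      rintro rfl
      exact Finset.disjoint_left.1 hdisj he₁ he₂
    rw [card_sdiff_of_subset hSA, hA, hS.card_eq, card_pair hne]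
    omega
  rw [← eq_of_subset_of_card_le hsub hcard]
  intro z hz
  rcases mem_insert.1 hz with rfl | hz
  · exact mem_union_left _ he₁
  · exact mem_singleton.1 hz ▸ mem_union_right _ he₂

variable {V : Type*} [Fintype V] [DecidableEq V] {G : SimpleGraph V} [DecidableRel G.Adj]
  {k : ℕ} {r s u v w x y z : V}

def HasCommonNeighborCliques (G : SimpleGraph V) (k : ℕ) : Prop :=
  ∀ u v, u ≠ v → ∃ S : Finset V, G.IsNClique k S ∧ ∀ x ∈ S, G.Adj u x ∧ G.Adj v x

def degreeIn (G : SimpleGraph V) [DecidableRel G.Adj] (s : Finset V) (v : V) : ℕ :=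
  #(G.neighborFinset v ∩ s)

lemma degreeIn_le_card (s : Finset V) (v : V) : G.degreeIn s v ≤ #s :=
  card_le_card inter_subset_right

lemma degreeIn_le_card_sub_one {s : Finset V} (hv : v ∈ s) : G.degreeIn s v ≤ #s - 1 := by
  rw [← card_erase_of_mem hv]
  refine card_le_card fun u hu => ?_
  rw [mem_inter, mem_neighborFinset] at hu
  exact mem_erase.2 ⟨hu.1.ne', hu.2⟩

lemma sum_degreeIn_comm (s t : Finset V) :
    ∑ v ∈ s, G.degreeIn t v = ∑ v ∈ t, G.degreeIn s v := by
  have h : ∀ (r : Finset V) (v : V), G.degreeIn r v = #(r.filter (G.Adj v)) := by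
    intro r v
    rw [degreeIn]
    congr 1
    ext u
    simp [and_comm]
  simp only [h, card_filter]
  rw [sum_comm]
  simp only [adj_comm]

lemma degree_eq_degreeIn_add (G : SimpleGraph V) [DecidableRel G.Adj] (s : Finset V) (v : V) :
    G.degree v = G.degreeIn s v + G.degreeIn sᶜ v := by
  rw [← card_neighborFinset_eq_degree, degreeIn, degreeIn, ← sdiff_eq_inter_compl,
    card_inter_add_card_sdiff]

lemma mem_compl_neighborFinset : x ∈ Gᶜ.neighborFinset w ↔ w ≠ x ∧ ¬ G.Adj w x := by
  rw [mem_neighborFinset, compl_adj]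

lemma degree_eq_of_mem_compl_neighborFinset (hx : x ∈ Gᶜ.neighborFinset w) :
    G.degree x = G.degreeIn (G.neighborFinset w) x + G.degreeIn (Gᶜ.neighborFinset w) x := by
  rw [degree_eq_degreeIn_add G (G.neighborFinset w)]
  congr 1
  rw [degreeIn, degreeIn, neighborFinset_compl]
  congr 1
  ext u
  simp only [mem_inter, mem_compl, mem_sdiff, mem_singleton, mem_neighborFinset]
  refine ⟨fun ⟨hxu, hwu⟩ => ⟨hxu, hwu, ?_⟩, fun h => ⟨h.1, h.2.1⟩⟩
  rintro rfl
  exact (mem_compl_neighborFinset.1 hx).2 hxu.symm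

lemma card_compl_neighborFinset_add_degree (w : V) :
    #(Gᶜ.neighborFinset w) + G.degree w + 1 = Fintype.card V := by
  have := G.degree_lt_card_verts w
  rw [card_neighborFinset_eq_degree, degree_compl]
  omega

lemma compl_neighborFinset_eq_insert (w : V) :
    (G.neighborFinset w)ᶜ = insert w (Gᶜ.neighborFinset w) := by
  ext x
  by_cases hx : x = w
  · simp [hx]
  · simp [hx, Ne.symm hx]

lemma sum_degrees_eq_two_mul_degree_add (w : V) :
    ∑ v, G.degree v = 2 * G.degree w + ∑ v ∈ G.neighborFinset w, G.degreeIn (G.neighborFinset w) v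
      + ∑ x ∈ Gᶜ.neighborFinset w, (G.degreeIn (G.neighborFinset w) x + G.degree x) := by
  set A := G.neighborFinset w
  have hwO : w ∉ Gᶜ.neighborFinset w := by simp
  have hwA : G.degreeIn A w = G.degree w := by
    rw [degreeIn, inter_self, card_neighborFinset_eq_degree]
  have hA : ∑ v ∈ A, G.degree v = ∑ v ∈ A, G.degreeIn A v + G.degree w
      + ∑ x ∈ Gᶜ.neighborFinset w, G.degreeIn A x := by
    rw [sum_congr rfl fun v _ => degree_eq_degreeIn_add G A v, sum_add_distrib,
      sum_degreeIn_comm A Aᶜ, compl_neighborFinset_eq_insert, sum_insert hwO, hwA]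
    ring
  rw [← sum_add_sum_compl A, hA, compl_neighborFinset_eq_insert, sum_insert hwO, sum_add_distrib]
  ring

lemma degreeIn_add_two_le {t : Finset V} (hv : v ∈ t) (hu : u ∈ t) (hvu : Gᶜ.Adj v u) :
    G.degreeIn t v + 2 ≤ #t := by
  rw [compl_adj] at hvu
  have hsub : G.neighborFinset v ∩ t ⊆ (t.erase v).erase u := fun z hz => by
    rw [mem_inter, mem_neighborFinset] at hz
    exact mem_erase.2 ⟨by rintro rfl; exact hvu.2 hz.1, mem_erase.2 ⟨hz.1.ne', hz.2⟩⟩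
  have := card_le_card hsub
  rw [← card_erase_add_one hv, ← card_erase_add_one (mem_erase.2 ⟨hvu.1.symm, hu⟩)]
  exact Nat.add_le_add_right this 2

lemma degree_le_degreeIn_add_one (w v : V) :
    G.degree v ≤ G.degreeIn (G.neighborFinset w) v + G.degreeIn (Gᶜ.neighborFinset w) v + 1 := by
  rw [degree_eq_degreeIn_add G (G.neighborFinset w), compl_neighborFinset_eq_insert, add_assoc]
  refine Nat.add_le_add_left ((card_le_card fun z hz => ?_).trans (card_insert_le w _)) _
  rw [mem_inter, mem_insert] at hz
  rw [mem_insert, mem_inter]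
  tauto

lemma exists_mem_compl_neighborFinset_adj (hv : v ∈ G.neighborFinset w)
    (hu : u ∈ G.neighborFinset w) (hvu : Gᶜ.Adj v u) (hdeg : G.degree w ≤ G.degree v) :
    ∃ x ∈ Gᶜ.neighborFinset w, G.Adj x v := by
  have h1 := degreeIn_add_two_le hv hu hvu
  have h2 := degree_le_degreeIn_add_one (G := G) w v
  rw [card_neighborFinset_eq_degree] at h1
  obtain ⟨x, hx⟩ := card_pos.1 (by omega : 0 < G.degreeIn (Gᶜ.neighborFinset w) v)
  rw [mem_inter, mem_neighborFinset] at hx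
  exact ⟨x, hx.2, hx.1.symm⟩

lemma mem_compl_neighborFinset_of_compl_adj (hA : G.IsClique (G.neighborFinset w : Set V))
    (hs : s ∈ G.neighborFinset w) (hsy : Gᶜ.Adj s y) : y ∈ Gᶜ.neighborFinset w := by
  rw [mem_neighborFinset] at hs
  rw [compl_adj] at hsy
  rw [mem_compl_neighborFinset]
  refine ⟨by rintro rfl; exact hsy.2 hs.symm, fun hwy => hsy.2 ?_⟩
  exact hA (by simpa using hs) (by simpa using hwy) hsy.1

lemma not_adj_and_adj_of_isClique {t : Finset V} {e e' : V}
    (hx : G.IsClique ((G.neighborFinset x ∩ t : Finset V) : Set V)) (hee' : Gᶜ.Adj e e')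
    (he : e ∈ t) (he' : e' ∈ t) : ¬ (G.Adj x e ∧ G.Adj x e') := by
  rintro ⟨hxe, hxe'⟩
  rw [compl_adj] at hee'
  exact hee'.2 (hx (by simp [hxe, he]) (by simp [hxe', he']) hee'.1)

lemma adj_or_adj_of_isClique {t : Finset V} {e e' f f' : V}
    (ht : ∀ z, z ∈ t ↔ z = e ∨ z = e' ∨ z = f ∨ z = f') (hff' : Gᶜ.Adj f f')
    (hx : G.IsClique ((G.neighborFinset x ∩ t : Finset V) : Set V)) (h2 : 2 ≤ G.degreeIn t x) :
    G.Adj x e ∨ G.Adj x e' := by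
  by_contra! hxe
  have hff : ∀ z ∈ G.neighborFinset x ∩ t, G.Adj x z ∧ (z = f ∨ z = f') := by
    intro z hz
    rw [mem_inter, mem_neighborFinset] at hz
    refine ⟨hz.1, ?_⟩
    rcases (ht z).1 hz.2 with rfl | rfl | h | h
    exacts [absurd hz.1 hxe.1, absurd hz.1 hxe.2, Or.inl h, Or.inr h]
  rw [degreeIn] at h2
  obtain ⟨z₁, hz₁, z₂, hz₂, hne⟩ := one_lt_card.1 (by omega : 1 < #(G.neighborFinset x ∩ t))
  have hf : f ∈ t := (ht f).2 (by simp)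
  have hf' : f' ∈ t := (ht f').2 (by simp)
  obtain ⟨hxz₁, rfl | rfl⟩ := hff z₁ hz₁ <;> obtain ⟨hxz₂, rfl | rfl⟩ := hff z₂ hz₂
  · exact hne rfl
  · exact not_adj_and_adj_of_isClique hx hff' hf hf' ⟨hxz₁, hxz₂⟩
  · exact not_adj_and_adj_of_isClique hx hff' hf hf' ⟨hxz₂, hxz₁⟩
  · exact hne rfl

namespace HasCommonNeighborCliques

lemma exists_subset_inter (hG : G.HasCommonNeighborCliques k) (huv : u ≠ v) :
    ∃ S, G.IsNClique k S ∧ S ⊆ G.neighborFinset u ∩ G.neighborFinset v := by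
  obtain ⟨S, hS, hSuv⟩ := hG u v huv
  exact ⟨S, hS, fun x hx => by simpa using hSuv x hx⟩

lemma le_degreeIn (hG : G.HasCommonNeighborCliques k) (hvw : v ≠ w) :
    k ≤ G.degreeIn (G.neighborFinset w) v := by
  obtain ⟨S, hS, hSvw⟩ := hG.exists_subset_inter hvw
  exact hS.card_eq ▸ card_le_card hSvw

lemma mul_le_sum_degreeIn (hG : G.HasCommonNeighborCliques k) (w : V) :
    G.degree w * k ≤ ∑ v ∈ G.neighborFinset w, G.degreeIn (G.neighborFinset w) v := by
  rw [← card_neighborFinset_eq_degree, ← smul_eq_mul]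
  exact card_nsmul_le_sum _ _ _ fun v hv => hG.le_degreeIn (by rintro rfl; simp at hv)

lemma mul_le_sum_of_forall_le_degree (hG : G.HasCommonNeighborCliques k)
    (hmin : ∀ v, G.degree w ≤ G.degree v) :
    (k + G.degree w) * #(Gᶜ.neighborFinset w) ≤
      ∑ x ∈ Gᶜ.neighborFinset w, (G.degreeIn (G.neighborFinset w) x + G.degree x) := by
  rw [mul_comm, ← smul_eq_mul]
  exact card_nsmul_le_sum _ _ _ fun x hx =>
    add_le_add (hG.le_degreeIn (mem_compl_neighborFinset.1 hx).1.symm) (hmin x)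

lemma lt_degree_of_adj (hG : G.HasCommonNeighborCliques k) (hvr : G.Adj v r) :
    k < G.degree v := by
  obtain ⟨S, hS, hSvr⟩ := hG.exists_subset_inter hvr.ne
  have hS_sub : S ⊆ (G.neighborFinset v).erase r := fun x hx => by
    have hx' := mem_inter.1 (hSvr hx)
    exact mem_erase.2 ⟨fun h => by simp [h] at hx', hx'.1⟩
  have := card_le_card hS_sub
  rw [card_erase_of_mem (by simpa using hvr), card_neighborFinset_eq_degree, hS.card_eq] at this
  have := G.degree_pos_iff_exists_adj v |>.2 ⟨r, hvr⟩
  omega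

lemma lt_degree (hG : G.HasCommonNeighborCliques k) (hk : 1 ≤ k) (hv : ∃ u, Gᶜ.Adj v u) :
    k < G.degree v := by
  obtain ⟨u, hvu⟩ := hv
  obtain ⟨S, hS, hSvu⟩ := hG.exists_subset_inter hvu.ne
  obtain ⟨r, hr⟩ := card_pos.1 (hS.card_eq ▸ hk)
  exact hG.lt_degree_of_adj (by simpa using (mem_inter.1 (hSvu hr)).1)

/-- The common `k`-clique of `v` and `y` lies in `N(v) \ {s}`, which has only `k` elements. -/
lemma isNClique_erase_and_subset (hG : G.HasCommonNeighborCliques k)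
    (hdeg : G.degree v = k + 1) (hvs : G.Adj v s) (hvy : v ≠ y) (hsy : ¬ G.Adj s y) :
    G.IsNClique k ((G.neighborFinset v).erase s) ∧
      (G.neighborFinset v).erase s ⊆ G.neighborFinset y := by
  obtain ⟨S, hS, hSvy⟩ := hG.exists_subset_inter hvy
  have hS_sub : S ⊆ (G.neighborFinset v).erase s := fun x hx => by
    have hx' := mem_inter.1 (hSvy hx)
    refine mem_erase.2 ⟨?_, hx'.1⟩
    rintro rfl
    exact hsy (by simpa [adj_comm] using hx'.2)
  have hS_eq : S = (G.neighborFinset v).erase s := by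
    refine eq_of_subset_of_card_le hS_sub ?_
    rw [card_erase_of_mem (by simpa using hvs), card_neighborFinset_eq_degree, hdeg, hS.card_eq]
    rfl
  exact hS_eq ▸ ⟨hS, fun x hx => (mem_inter.1 (hSvy hx)).2⟩

lemma isClique_neighborFinset (hG : G.HasCommonNeighborCliques k) (hk : 2 ≤ k)
    (hdeg : G.degree v = k + 1) : G.IsClique (G.neighborFinset v : Set V) := by
  intro s hs t ht hst
  simp only [coe_neighborFinset, mem_neighborSet] at hs ht
  have hcard : 0 < #(((G.neighborFinset v).erase s).erase t) := by
    rw [card_erase_of_mem (by simpa [hst.symm] using ht),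
      card_erase_of_mem (by simpa using hs), card_neighborFinset_eq_degree, hdeg]
    omega
  obtain ⟨r, hr⟩ := card_pos.1 hcard
  simp only [mem_erase, mem_neighborFinset] at hr
  obtain ⟨hrt, hrs, hvr⟩ := hr
  refine (hG.isNClique_erase_and_subset hdeg hvr hvr.ne (G.irrefl (v := r))).1.isClique
    ?_ ?_ hst <;> simp [*, Ne.symm hrs, Ne.symm hrt]

lemma neighborFinset_inter_eq_of_adj (hG : G.HasCommonNeighborCliques k) (hk : 2 ≤ k)
    (hdeg : G.degree y = k + 1) (hxy : G.Adj x y) {t : Finset V} (hxt : x ∉ t)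
    (hle : G.degreeIn t x ≤ G.degreeIn t y) :
    G.neighborFinset x ∩ t = G.neighborFinset y ∩ t := by
  have hclique := hG.isClique_neighborFinset hk hdeg
  refine (eq_of_subset_of_card_le (fun z hz => ?_) hle).symm
  rw [mem_inter, mem_neighborFinset] at hz ⊢
  refine ⟨(hclique (by simpa using hz.1) (by simpa using hxy.symm) ?_).symm, hz.2⟩
  rintro rfl
  exact hxt hz.2

lemma isClique_neighborFinset_inter (hG : G.HasCommonNeighborCliques k) (hxw : x ≠ w)
    (hx : G.degreeIn (G.neighborFinset w) x ≤ k) :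
    G.IsClique ((G.neighborFinset x ∩ G.neighborFinset w : Finset V) : Set V) := by
  obtain ⟨S, hS, hSx⟩ := hG.exists_subset_inter hxw
  rw [← eq_of_subset_of_card_le hSx (by rw [hS.card_eq]; exact hx)]
  exact hS.isClique

/-- Two vertices of `O` whose common neighbours all lie in `O` have their common `k`-clique in
`O`, and then any vertex of that clique has `k + 1` neighbours in `O`. -/
lemma false_of_forall_adj_mem (hG : G.HasCommonNeighborCliques k) (hk : 1 ≤ k) {O : Finset V}
    (hO : ∀ z ∈ O, G.degreeIn O z ≤ k) (hx : x ∈ O) (hy : y ∈ O) (hxy : x ≠ y)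
    (hxyO : ∀ z, G.Adj x z → G.Adj y z → z ∈ O) : False := by
  obtain ⟨T, hT, hTxy⟩ := hG.exists_subset_inter hxy
  have hTadj : ∀ z ∈ T, G.Adj x z ∧ G.Adj y z := fun z hz => by simpa using hTxy hz
  obtain ⟨t, ht⟩ := card_pos.1 (hT.card_eq ▸ hk)
  have hsub : insert x (insert y (T.erase t)) ⊆ G.neighborFinset t ∩ O := by
    intro z hz
    simp only [mem_insert, mem_erase] at hz
    rw [mem_inter, mem_neighborFinset]
    rcases hz with rfl | rfl | ⟨hzt, hzT⟩
    · exact ⟨(hTadj t ht).1.symm, hx⟩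
    · exact ⟨(hTadj t ht).2.symm, hy⟩
    · exact ⟨hT.isClique ht hzT (Ne.symm hzt), hxyO z (hTadj z hzT).1 (hTadj z hzT).2⟩
  have hxT : x ∉ T := fun h => G.loopless.irrefl x (hTadj x h).1
  have hyT : y ∉ T := fun h => G.loopless.irrefl y (hTadj y h).2
  have hcard := card_le_card hsub
  rw [card_insert_of_notMem (by simp [hxy, hxT]), card_insert_of_notMem (by simp [hyT]),
    card_erase_of_mem ht, hT.card_eq] at hcard
  have := hO t (hxyO t (hTadj t ht).1 (hTadj t ht).2)
  rw [degreeIn] at this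
  omega

end HasCommonNeighborCliques

/-- When `w` has minimum degree `k + 1`, these are exactly the `x ∉ N[w]` with
`degreeIn (N w) x + degree x < 2(k + 1)`. -/
def deficientSet (G : SimpleGraph V) [DecidableRel G.Adj] (k : ℕ) (w : V) : Finset V :=
  (Gᶜ.neighborFinset w).filter fun x => G.degree x = k + 1 ∧ G.degreeIn (G.neighborFinset w) x = k

lemma deficientSet_subset : G.deficientSet k w ⊆ Gᶜ.neighborFinset w := filter_subset _ _

namespace HasCommonNeighborCliques

lemma notMem_deficientSet_of_adj (hG : G.HasCommonNeighborCliques k) (hk : 2 ≤ k)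
    (hx : x ∈ Gᶜ.neighborFinset w) (hax : G.degreeIn (G.neighborFinset w) x = k)
    (hxz : G.Adj x z) (hs : s ∈ G.neighborFinset x ∩ G.neighborFinset w) (hsz : Gᶜ.Adj s z) :
    z ∉ G.deficientSet k w := by
  intro hz
  obtain ⟨-, hdz, haz⟩ := mem_filter.1 hz
  have hxA : x ∉ G.neighborFinset w := fun h => (mem_compl_neighborFinset.1 hx).2 (by simpa using h)
  rw [hG.neighborFinset_inter_eq_of_adj hk hdz hxz hxA (hax.trans haz.symm).le, mem_inter,
    mem_neighborFinset] at hs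
  exact ((compl_adj G s z).1 hsz).2 hs.1.symm

/-- A non-neighbour of each `s ∈ N(y) ∩ N(w)` is adjacent to `x` and lies outside `N[w]`; these
are distinct, and none of them is deficient. -/
lemma add_degreeIn_deficientSet_le (hG : G.HasCommonNeighborCliques k)
    (hk : 2 ≤ k) (hdom : ∀ v, ∃ u, Gᶜ.Adj v u) (hw : G.degree w = k + 1)
    (hx : x ∈ Gᶜ.neighborFinset w) (hax : G.degreeIn (G.neighborFinset w) x = k)
    (hy : y ∈ G.deficientSet k w) (hxy : G.Adj x y) :
    k + G.degreeIn (G.deficientSet k w) x ≤ G.degreeIn (Gᶜ.neighborFinset w) x := by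
  set A := G.neighborFinset w
  set O := Gᶜ.neighborFinset w
  set B := G.deficientSet k w
  set S := G.neighborFinset y ∩ A
  obtain ⟨-, hdy, hay⟩ := mem_filter.1 hy
  have hxA : x ∉ A := fun h => (mem_compl_neighborFinset.1 hx).2 (by simpa [A] using h)
  have hNx : G.neighborFinset x ∩ A = S :=
    hG.neighborFinset_inter_eq_of_adj hk hdy hxy hxA (hax.trans hay.symm).le
  choose f hf using hdom
  have hfN : ∀ s ∈ S, (G.neighborFinset y).erase s ⊆ G.neighborFinset (f s) := by
    intro s hs
    have hys : G.Adj y s := by simpa using (mem_inter.1 hs).1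
    refine (hG.isNClique_erase_and_subset hdy hys ?_ (hf s).2).2
    rintro rfl
    exact (hf s).2 hys.symm
  have hmaps : Set.MapsTo f S ((G.neighborFinset x ∩ O) \ B : Finset V) := by
    intro s hs
    have hxs : x ∈ (G.neighborFinset y).erase s :=
      mem_erase.2 ⟨fun h => hxA (h ▸ (mem_inter.1 hs).2), by simpa using hxy.symm⟩
    have hxfs : G.Adj x (f s) := by simpa [adj_comm] using hfN s hs hxs
    have hfO : f s ∈ O := mem_compl_neighborFinset_of_compl_adj
      (hG.isClique_neighborFinset hk hw) (mem_inter.1 hs).2 (hf s)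
    refine mem_coe.2 (mem_sdiff.2 ⟨mem_inter.2 ⟨by simpa using hxfs, hfO⟩, ?_⟩)
    exact hG.notMem_deficientSet_of_adj hk hx hax hxfs (hNx ▸ hs) (hf s)
  have hinj : Set.InjOn f S := by
    intro s hs t ht hst
    by_contra hne
    have ht' : t ∈ (G.neighborFinset y).erase s :=
      mem_erase.2 ⟨Ne.symm hne, (mem_inter.1 (mem_coe.1 ht)).1⟩
    exact (hf t).2 (by simpa [hst, adj_comm] using hfN s hs ht')
  have hcard := card_le_card_of_injOn f hmaps hinj
  have hsplit : #((G.neighborFinset x ∩ O) \ B) + #(G.neighborFinset x ∩ B) =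
      #(G.neighborFinset x ∩ O) := by
    rw [← card_sdiff_add_card_inter (G.neighborFinset x ∩ O) B, inter_assoc,
      inter_eq_right.2 deficientSet_subset]
  have hS : #S = k := hay
  rw [degreeIn, degreeIn, ← hsplit]
  omega

lemma le_add_degreeIn_deficientSet (hG : G.HasCommonNeighborCliques k)
    (hk : 2 ≤ k) (hdom : ∀ v, ∃ u, Gᶜ.Adj v u) (hw : G.degree w = k + 1)
    (hmin : ∀ v, k + 1 ≤ G.degree v) (hx : x ∈ Gᶜ.neighborFinset w) :
    2 * (k + 1) + G.degreeIn (G.deficientSet k w) x ≤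
      G.degreeIn (G.neighborFinset w) x + G.degree x + if x ∈ G.deficientSet k w then 1 else 0 := by
  have hax : k ≤ G.degreeIn (G.neighborFinset w) x :=
    hG.le_degreeIn (mem_compl_neighborFinset.1 hx).1.symm
  have hax' : G.degreeIn (G.neighborFinset w) x ≤ k + 1 :=
    hw ▸ card_neighborFinset_eq_degree G w ▸ degreeIn_le_card _ _
  have hdeg := degree_eq_of_mem_compl_neighborFinset hx
  have hBO : G.degreeIn (G.deficientSet k w) x ≤ G.degreeIn (Gᶜ.neighborFinset w) x :=
    card_le_card (inter_subset_inter_left deficientSet_subset)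
  have hdx := hmin x
  by_cases hc : G.degreeIn (G.deficientSet k w) x = 0
  · have hB : x ∈ G.deficientSet k w ↔ G.degree x = k + 1 ∧ G.degreeIn (G.neighborFinset w) x = k :=
      by simp [deficientSet, hx]
    split_ifs with h <;> simp only [hB] at h <;> omega
  · obtain ⟨y, hy⟩ := card_pos.1 (Nat.pos_of_ne_zero hc)
    rw [mem_inter, mem_neighborFinset] at hy
    rcases (show G.degreeIn (G.neighborFinset w) x = k ∨ G.degreeIn (G.neighborFinset w) x = k + 1
      by omega) with hax | hax
    · have := hG.add_degreeIn_deficientSet_le hk hdom hw hx hax hy.2 hy.1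
      split_ifs <;> omega
    · split_ifs <;> omega

lemma le_sum_of_degree_eq_add_one (hG : G.HasCommonNeighborCliques k)
    (hk : 2 ≤ k) (hdom : ∀ v, ∃ u, Gᶜ.Adj v u) (hw : G.degree w = k + 1)
    (hmin : ∀ v, k + 1 ≤ G.degree v) :
    2 * (k + 1) * #(Gᶜ.neighborFinset w) ≤
      ∑ x ∈ Gᶜ.neighborFinset w, (G.degreeIn (G.neighborFinset w) x + G.degree x) := by
  have hBO : ∑ x ∈ Gᶜ.neighborFinset w, G.degreeIn (G.deficientSet k w) x =
      #(G.deficientSet k w) := by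
    rw [sum_degreeIn_comm, card_eq_sum_ones]
    refine sum_congr rfl fun y hy => ?_
    obtain ⟨hyO, hdy, hay⟩ := mem_filter.1 hy
    have := degree_eq_of_mem_compl_neighborFinset hyO
    omega
  have hB : ∑ x ∈ Gᶜ.neighborFinset w, (if x ∈ G.deficientSet k w then 1 else 0) =
      #(G.deficientSet k w) := by
    rw [sum_boole, Nat.cast_id, filter_mem_eq_inter, inter_eq_right.2 deficientSet_subset]
  have hsum := sum_le_sum fun x hx => hG.le_add_degreeIn_deficientSet hk hdom hw hmin (x := x) hx
  rw [sum_add_distrib, sum_const, smul_eq_mul, hBO, sum_add_distrib, hB] at hsum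
  linarith

lemma eq_of_compl_adj (hG : G.HasCommonNeighborCliques k) (hw : G.degree w = k + 2)
    {u' : V} (hv : v ∈ G.neighborFinset w) (hu : u ∈ G.neighborFinset w)
    (hu' : u' ∈ G.neighborFinset w) (hvu : Gᶜ.Adj v u) (hvu' : Gᶜ.Adj v u') : u = u' := by
  by_contra hne
  rw [compl_adj] at hvu hvu'
  have hsub : G.neighborFinset v ∩ G.neighborFinset w ⊆
      (((G.neighborFinset w).erase v).erase u).erase u' := fun z hz => by
    rw [mem_inter, mem_neighborFinset] at hz
    refine mem_erase.2 ⟨by rintro rfl; exact hvu'.2 hz.1,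
      mem_erase.2 ⟨by rintro rfl; exact hvu.2 hz.1, mem_erase.2 ⟨hz.1.ne', hz.2⟩⟩⟩
  have hcard := card_le_card hsub
  have hk := hG.le_degreeIn (v := v) (w := w) (by rintro rfl; simp at hv)
  rw [degreeIn] at hk
  have e1 := card_erase_add_one (mem_erase.2 ⟨hne ∘ Eq.symm, mem_erase.2 ⟨hvu'.1.symm, hu'⟩⟩)
  have e2 := card_erase_add_one (mem_erase.2 ⟨hvu.1.symm, hu⟩)
  have e3 := card_erase_add_one hv
  rw [card_neighborFinset_eq_degree, hw] at e3
  omega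

/-- Each vertex of `N(w)` has `k` or `k + 1` neighbours in `N(w)`, according as it has a
non-neighbour there or not. -/
lemma sum_degreeIn_add_card_filter (hG : G.HasCommonNeighborCliques k)
    (hw : G.degree w = k + 2) :
    ∑ v ∈ G.neighborFinset w, G.degreeIn (G.neighborFinset w) v +
      #((G.neighborFinset w).filter fun v => ∃ u ∈ G.neighborFinset w, Gᶜ.Adj v u) =
      (k + 2) * (k + 1) := by
  set A := G.neighborFinset w
  have hA : #A = k + 2 := by rw [card_neighborFinset_eq_degree, hw]
  rw [card_filter, ← sum_add_distrib, ← hA, ← smul_eq_mul, ← sum_const]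
  refine sum_congr rfl fun v hv => ?_
  have hk : k ≤ G.degreeIn A v := hG.le_degreeIn (by rintro rfl; simp [A] at hv)
  have hle := degreeIn_le_card_sub_one (G := G) hv
  split_ifs with h
  · obtain ⟨u, hu, hvu⟩ := h
    have := degreeIn_add_two_le hv hu hvu
    omega
  · push Not at h
    have hsub : A.erase v ⊆ G.neighborFinset v ∩ A := fun u hu => by
      rw [mem_erase] at hu
      refine mem_inter.2 ⟨?_, hu.2⟩
      by_contra hvu
      exact h u hu.2 ((compl_adj G v u).2 ⟨hu.1.symm, by simpa using hvu⟩)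
    have := card_le_card hsub
    rw [card_erase_of_mem hv] at this
    rw [degreeIn] at hle ⊢
    omega

lemma exists_disjoint_compl_adj (hG : G.HasCommonNeighborCliques k) (hw : G.degree w = k + 2)
    (hD : 3 ≤ #((G.neighborFinset w).filter fun v => ∃ u ∈ G.neighborFinset w, Gᶜ.Adj v u)) :
    ∃ a b c d, Gᶜ.Adj a b ∧ Gᶜ.Adj c d ∧ {a, b} ∪ {c, d} ⊆ G.neighborFinset w ∧
      Disjoint ({a, b} : Finset V) {c, d} := by
  set D := (G.neighborFinset w).filter fun v => ∃ u ∈ G.neighborFinset w, Gᶜ.Adj v u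
  obtain ⟨a, ha⟩ := card_pos.1 (by omega : 0 < #D)
  obtain ⟨haA, b, hbA, hab⟩ := mem_filter.1 ha
  obtain ⟨c, hc, hcab⟩ := exists_mem_notMem_of_card_lt_card
    ((card_le_two (a := a) (b := b)).trans_lt (by omega : 2 < #D))
  obtain ⟨hcA, d, hdA, hcd⟩ := mem_filter.1 hc
  have hdab : d ∉ ({a, b} : Finset V) := by
    simp only [mem_insert, mem_singleton]
    rintro (rfl | rfl)
    · exact hcab (by simp [hG.eq_of_compl_adj hw haA hcA hbA hcd.symm hab])
    · exact hcab (by simp [hG.eq_of_compl_adj hw hbA hcA haA hcd.symm hab.symm])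
  refine ⟨a, b, c, d, hab, hcd, ?_, Finset.disjoint_left.2 fun z hz hz' => ?_⟩
  · intro z hz
    simp only [mem_union, mem_insert, mem_singleton] at hz
    rcases hz with (rfl | rfl) | (rfl | rfl) <;> assumption
  · rcases mem_insert.1 hz' with rfl | hz'
    · exact hcab hz
    · exact hdab (mem_singleton.1 hz' ▸ hz)

lemma false_of_three_le (hG : G.HasCommonNeighborCliques k) (hk : 3 ≤ k)
    (hdom : ∀ v, ∃ u, Gᶜ.Adj v u) (hw : G.degree w = k + 2) {a b c d : V}
    (hab : Gᶜ.Adj a b) (hcd : Gᶜ.Adj c d) (habcd : {a, b} ∪ {c, d} ⊆ G.neighborFinset w)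
    (hdisj : Disjoint ({a, b} : Finset V) {c, d}) : False := by
  set A := G.neighborFinset w
  have hA : #A = k + 2 := by rw [card_neighborFinset_eq_degree, hw]
  have hQ : #({a, b} ∪ {c, d} : Finset V) ≤ 4 :=
    (card_union_le _ _).trans (add_le_add card_le_two card_le_two)
  obtain ⟨s, hsA, hsQ⟩ := exists_mem_notMem_of_card_lt_card (hQ.trans_lt (by omega : 4 < #A))
  have hsS : ∀ x, Gᶜ.Adj w x → ∃ S, G.IsNClique k S ∧ S ⊆ A ∩ G.neighborFinset x ∧ s ∈ S := by
    intro x hwx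
    obtain ⟨S, hS, hSwx⟩ := hG.exists_subset_inter hwx.ne
    refine ⟨S, hS, hSwx, by_contra fun hs => hsQ ?_⟩
    exact sdiff_subset_of_isNClique hS (hSwx.trans inter_subset_left) hA hab hcd habcd hdisj
      (mem_sdiff.2 ⟨hsA, hs⟩)
  have hws : G.Adj w s := by simpa [A] using hsA
  obtain ⟨u, hsu⟩ := hdom s
  rw [compl_adj] at hsu
  have huA : u ∈ A := by
    by_contra huA
    have hwu : Gᶜ.Adj w u := (compl_adj G w u).2
      ⟨by rintro rfl; exact hsu.2 hws.symm, by simpa [A] using huA⟩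
    obtain ⟨S, -, hS, hsS⟩ := hsS u hwu
    exact hsu.2 (by simpa [adj_comm] using (mem_inter.1 (hS hsS)).2)
  obtain ⟨x, hwx⟩ := hdom w
  obtain ⟨S, hS, hSwx, hsS⟩ := hsS x hwx
  have huS : u ∉ S := fun huS => hsu.2 (hS.isClique hsS huS hsu.1)
  have huQ := sdiff_subset_of_isNClique hS (hSwx.trans inter_subset_left) hA hab hcd habcd hdisj
    (mem_sdiff.2 ⟨huA, huS⟩)
  have hus : Gᶜ.Adj u s := (compl_adj G u s).2 ⟨hsu.1.symm, fun h => hsu.2 h.symm⟩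
  simp only [mem_union, mem_insert, mem_singleton] at huQ hsQ
  rcases huQ with (rfl | rfl) | (rfl | rfl)
  · exact hsQ (Or.inl (Or.inr (hG.eq_of_compl_adj hw huA hsA (habcd (by simp)) hus hab)))
  · exact hsQ (Or.inl (Or.inl (hG.eq_of_compl_adj hw huA hsA (habcd (by simp)) hus hab.symm)))
  · exact hsQ (Or.inr (Or.inr (hG.eq_of_compl_adj hw huA hsA (habcd (by simp)) hus hcd)))
  · exact hsQ (Or.inr (Or.inl (hG.eq_of_compl_adj hw huA hsA (habcd (by simp)) hus hcd.symm)))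

lemma false_of_adj_of_adj (hG : G.HasCommonNeighborCliques k) (hk : 1 ≤ k)
    (hO : ∀ z ∈ Gᶜ.neighborFinset w, G.degreeIn (Gᶜ.neighborFinset w) z ≤ k)
    (hcl : ∀ z ∈ Gᶜ.neighborFinset w,
      G.IsClique ((G.neighborFinset z ∩ G.neighborFinset w : Finset V) : Set V))
    {p p' r r' : V} (hpp' : Gᶜ.Adj p p') (hrr' : Gᶜ.Adj r r')
    (hA : ∀ z, z ∈ G.neighborFinset w ↔ z = p ∨ z = p' ∨ z = r ∨ z = r')
    (hx : x ∈ Gᶜ.neighborFinset w) (hy : y ∈ Gᶜ.neighborFinset w)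
    (hxp : G.Adj x p) (hxr : G.Adj x r) (hyp' : G.Adj y p') (hyr' : G.Adj y r') : False := by
  have hp : p ∈ G.neighborFinset w := (hA p).2 (by simp)
  have hp' : p' ∈ G.neighborFinset w := (hA p').2 (by simp)
  have hr : r ∈ G.neighborFinset w := (hA r).2 (by simp)
  have hr' : r' ∈ G.neighborFinset w := (hA r').2 (by simp)
  refine hG.false_of_forall_adj_mem hk hO hx hy ?_ fun z hxz hyz => ?_
  · rintro rfl
    exact not_adj_and_adj_of_isClique (hcl x hx) hpp' hp hp' ⟨hxp, hyp'⟩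
  rw [mem_compl_neighborFinset]
  refine ⟨by rintro rfl; exact (mem_compl_neighborFinset.1 hx).2 hxz.symm, fun hwz => ?_⟩
  rcases (hA z).1 (by simpa using hwz) with rfl | rfl | rfl | rfl
  · exact not_adj_and_adj_of_isClique (hcl y hy) hpp' hp hp' ⟨hyz, hyp'⟩
  · exact not_adj_and_adj_of_isClique (hcl x hx) hpp' hp hp' ⟨hxp, hxz⟩
  · exact not_adj_and_adj_of_isClique (hcl y hy) hrr' hr hr' ⟨hyz, hyr'⟩
  · exact not_adj_and_adj_of_isClique (hcl x hx) hrr' hr hr' ⟨hxr, hxz⟩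

lemma false_of_forall_degreeIn_eq_two (hG : G.HasCommonNeighborCliques 2)
    (hw : G.degree w = 4) (hmin : ∀ v, 4 ≤ G.degree v) {a b c d : V}
    (hab : Gᶜ.Adj a b) (hcd : Gᶜ.Adj c d)
    (hA : ∀ z, z ∈ G.neighborFinset w ↔ z = a ∨ z = b ∨ z = c ∨ z = d)
    (hO : ∀ x ∈ Gᶜ.neighborFinset w, G.degreeIn (G.neighborFinset w) x = 2 ∧
      G.degreeIn (Gᶜ.neighborFinset w) x = 2) : False := by
  set A := G.neighborFinset w
  set O := Gᶜ.neighborFinset w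
  have hcl : ∀ x ∈ O, G.IsClique ((G.neighborFinset x ∩ A : Finset V) : Set V) := fun x hx =>
    hG.isClique_neighborFinset_inter (mem_compl_neighborFinset.1 hx).1.symm (hO x hx).1.le
  have hcover : ∀ v ∈ A, ∃ x ∈ O, G.Adj x v := by
    intro v hv
    obtain ⟨u, hu, hvu⟩ : ∃ u ∈ A, Gᶜ.Adj v u := by
      rcases (hA v).1 hv with rfl | rfl | rfl | rfl
      exacts [⟨b, (hA b).2 (by simp), hab⟩, ⟨a, (hA a).2 (by simp), hab.symm⟩,
        ⟨d, (hA d).2 (by simp), hcd⟩, ⟨c, (hA c).2 (by simp), hcd.symm⟩]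
    exact exists_mem_compl_neighborFinset_adj hv hu hvu (hw ▸ hmin v)
  have hadj_or : ∀ x ∈ O, ∀ {e e' f f'}, Gᶜ.Adj f f' →
      (∀ z, z ∈ A ↔ z = e ∨ z = e' ∨ z = f ∨ z = f') → G.Adj x e ∨ G.Adj x e' :=
    fun x hx _ _ _ _ hff' hAe => adj_or_adj_of_isClique hAe hff' (hcl x hx) (hO x hx).1.ge
  have hopposite : ∀ {x y p p' r r'}, Gᶜ.Adj p p' → Gᶜ.Adj r r' →
      (∀ z, z ∈ A ↔ z = p ∨ z = p' ∨ z = r ∨ z = r') → x ∈ O → y ∈ O →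
      G.Adj x p → G.Adj x r → G.Adj y p' → G.Adj y r' → False :=
    hG.false_of_adj_of_adj one_le_two (fun z hz => (hO z hz).2.le) hcl
  have hA' : ∀ z, z ∈ A ↔ z = c ∨ z = d ∨ z = a ∨ z = b := fun z => (hA z).trans (by tauto)
  have hA'' : ∀ z, z ∈ A ↔ z = a ∨ z = b ∨ z = d ∨ z = c := fun z => (hA z).trans (by tauto)
  obtain ⟨xa, hxa, hxaa⟩ := hcover a ((hA a).2 (by simp))
  obtain ⟨xb, hxb, hxbb⟩ := hcover b ((hA b).2 (by simp))
  obtain ⟨xc, hxc, hxcc⟩ := hcover c ((hA c).2 (by simp))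
  obtain ⟨xd, hxd, hxdd⟩ := hcover d ((hA d).2 (by simp))
  rcases hadj_or xa hxa hab hA' with hxac | hxad <;>
    rcases hadj_or xb hxb hab hA' with hxbc | hxbd
  · rcases hadj_or xd hxd hcd hA with hxda | hxdb
    · exact hopposite hab hcd.symm hA'' hxd hxb hxda hxdd hxbb hxbc
    · exact hopposite hab hcd hA hxa hxd hxaa hxac hxdb hxdd
  · exact hopposite hab hcd hA hxa hxb hxaa hxac hxbb hxbd
  · exact hopposite hab hcd.symm hA'' hxa hxb hxaa hxad hxbb hxbc
  · rcases hadj_or xc hxc hcd hA with hxca | hxcb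
    · exact hopposite hab hcd hA hxc hxb hxca hxcc hxbb hxbd
    · exact hopposite hab hcd.symm hA'' hxa hxc hxaa hxad hxcb hxcc

lemma exists_lt_of_disjoint_compl_adj (hG : G.HasCommonNeighborCliques 2)
    (hw : G.degree w = 4) (hmin : ∀ v, 4 ≤ G.degree v) {a b c d : V}
    (hab : Gᶜ.Adj a b) (hcd : Gᶜ.Adj c d) (habcd : {a, b} ∪ {c, d} ⊆ G.neighborFinset w)
    (hdisj : Disjoint ({a, b} : Finset V) {c, d}) :
    ∃ x ∈ Gᶜ.neighborFinset w, 6 < G.degreeIn (G.neighborFinset w) x + G.degree x := by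
  by_contra! htight
  refine hG.false_of_forall_degreeIn_eq_two hw hmin hab hcd (fun z => ?_) fun x hx => ?_
  · have hA : {a, b} ∪ {c, d} = G.neighborFinset w := by
      refine eq_of_subset_of_card_le habcd ?_
      rw [card_union_of_disjoint hdisj, card_pair ((compl_adj G a b).1 hab).1,
        card_pair ((compl_adj G c d).1 hcd).1, card_neighborFinset_eq_degree, hw]
    rw [← hA]
    simp only [mem_union, mem_insert, mem_singleton]
    tauto
  · have := hG.le_degreeIn (mem_compl_neighborFinset.1 hx).1.symm
    have := degree_eq_of_mem_compl_neighborFinset hx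
    have := htight x hx
    have := hmin x
    omega

lemma le_sum_add_sum_of_degree_eq_add_two (hG : G.HasCommonNeighborCliques k) (hk : 2 ≤ k)
    (hdom : ∀ v, ∃ u, Gᶜ.Adj v u) (hw : G.degree w = k + 2) (hmin : ∀ v, k + 2 ≤ G.degree v) :
    2 * (k + 1) * #(Gᶜ.neighborFinset w) + (k + 2) * (k + 1) ≤
      ∑ x ∈ Gᶜ.neighborFinset w, (G.degreeIn (G.neighborFinset w) x + G.degree x) +
        ∑ v ∈ G.neighborFinset w, G.degreeIn (G.neighborFinset w) v + 2 := by
  have hD := hG.sum_degreeIn_add_card_filter hw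
  have hO := hG.mul_le_sum_of_forall_le_degree (w := w) (hw ▸ hmin)
  rw [hw] at hO
  by_cases hD2 : #((G.neighborFinset w).filter fun v => ∃ u ∈ G.neighborFinset w, Gᶜ.Adj v u) ≤ 2
  · nlinarith
  obtain ⟨a, b, c, d, hab, hcd, habcd, hdisj⟩ := hG.exists_disjoint_compl_adj hw (by omega)
  obtain rfl | hk3 := (show k = 2 ∨ 3 ≤ k by omega)
  · obtain ⟨x, hx, hx6⟩ := hG.exists_lt_of_disjoint_compl_adj hw hmin hab hcd habcd hdisj
    have hlt : 6 * #(Gᶜ.neighborFinset w) <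
        ∑ x ∈ Gᶜ.neighborFinset w, (G.degreeIn (G.neighborFinset w) x + G.degree x) := by
      rw [mul_comm, ← smul_eq_mul, ← sum_const]
      refine sum_lt_sum (fun y hy => ?_) ⟨x, hx, hx6⟩
      have := hG.le_degreeIn (mem_compl_neighborFinset.1 hy).1.symm
      have := hmin y
      omega
    have hDle := card_filter_le (G.neighborFinset w) fun v => ∃ u ∈ G.neighborFinset w, Gᶜ.Adj v u
    rw [card_neighborFinset_eq_degree, hw] at hDle
    have hpar := G.sum_degrees_eq_two_mul_degree_add w
    rw [sum_degrees_eq_twice_card_edges, hw] at hpar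
    omega
  · exact (hG.false_of_three_le hk3 hdom hw hab hcd habcd hdisj).elim

theorem mul_card_le_card_edgeFinset_add_choose (hG : G.HasCommonNeighborCliques k) (hk : 2 ≤ k)
    (hdom : ∀ v, ∃ u, Gᶜ.Adj v u) (hV : 3 * (k + 2) ≤ Fintype.card V) :
    (k + 1) * Fintype.card V ≤ #G.edgeFinset + (k + 2).choose 2 := by
  have hchoose := Nat.add_one_mul_choose_eq (k + 1) 1
  rw [Nat.choose_one_right] at hchoose
  suffices 2 * (k + 1) * Fintype.card V ≤ 2 * #G.edgeFinset + (k + 2) * (k + 1) by linarith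
  have : Nonempty V := Fintype.card_pos_iff.1 (by omega)
  obtain ⟨w, hw⟩ := G.exists_minimal_degree_vertex
  have hmin : ∀ v, G.degree w ≤ G.degree v := fun v => hw ▸ G.minDegree_le_degree v
  have hsum := G.sum_degrees_eq_two_mul_degree_add w
  rw [sum_degrees_eq_twice_card_edges] at hsum
  have hcard := G.card_compl_neighborFinset_add_degree w
  have hE := hG.mul_le_sum_degreeIn w
  have hO := hG.mul_le_sum_of_forall_le_degree hmin
  have hδ := hG.lt_degree (by omega) (hdom w)
  obtain hδ1 | hδ2 | hδ3 | hδ4 : G.degree w = k + 1 ∨ G.degree w = k + 2 ∨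
      (k + 3 ≤ G.degree w ∧ G.degree w ≤ 2 * k + 1) ∨ 2 * k + 2 ≤ G.degree w := by omega
  · have := hG.le_sum_of_degree_eq_add_one hk hdom hδ1 (hδ1 ▸ hmin)
    rw [hδ1] at hE hsum hcard
    nlinarith
  · have := hG.le_sum_add_sum_of_degree_eq_add_two hk hdom hδ2 (hδ2 ▸ hmin)
    rw [hδ2] at hsum hcard
    nlinarith
  · zify at *
    nlinarith [mul_nonneg (by linarith : (0 : ℤ) ≤ G.degree w - k - 3)
      (by linarith : (0 : ℤ) ≤ 2 * k + 1 - G.degree w)]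
  · have : Fintype.card V * G.degree w ≤ 2 * #G.edgeFinset := by
      rw [← sum_degrees_eq_twice_card_edges, ← smul_eq_mul, ← card_univ]
      exact card_nsmul_le_sum _ _ _ fun v _ => hmin v
    nlinarith

end HasCommonNeighborCliques

end SimpleGraph

theorem stmt9_general (q n : ℕ) (hq : 4 ≤ q) (hn : 3 * q ≤ n)
    (G : SimpleGraph (Fin n)) [DecidableRel G.Adj]
    (hradge : ∀ v : Fin n, ∃ u : Fin n, 2 ≤ G.dist v u)
    (hclique : ∀ u v : Fin n, u ≠ v →
      ∃ S : Finset (Fin n), S.card = q - 2 ∧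
        (∀ w ∈ S, G.Adj u w ∧ G.Adj v w) ∧
        (∀ w ∈ S, ∀ w' ∈ S, w ≠ w' → G.Adj w w')) :
    (q - 1) * n - q.choose 2 ≤ G.edgeFinset.card := by
  obtain ⟨k, rfl⟩ : ∃ k, q = k + 2 := ⟨q - 2, by omega⟩
  have hG : G.HasCommonNeighborCliques k := fun u v huv => by
    obtain ⟨S, hS, hSuv, hScl⟩ := hclique u v huv
    exact ⟨S, ⟨fun x hx y hy => hScl x hx y hy, hS⟩, hSuv⟩
  have hdom : ∀ v, ∃ u, Gᶜ.Adj v u := fun v => by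
    obtain ⟨u, hu⟩ := hradge v
    refine ⟨u, (G.compl_adj v u).2 ⟨?_, fun h => ?_⟩⟩
    · rintro rfl
      simp at hu
    · rw [SimpleGraph.dist_eq_one_iff_adj.2 h] at hu
      omega
  have hbound := hG.mul_card_le_card_edgeFinset_add_choose (by omega) hdom (by simpa using hn)
  rw [Fintype.card_fin] at hbound
  rwa [Nat.sub_le_iff_le_add, show k + 2 - 1 = k + 1 by omega]

/-- Let `q ≥ 4`, `n ≥ 3q`. If `G` is a graph on `n` vertices with radius 2 such
that the common neighborhood of every pair of vertices contains a clique on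
`q-2` vertices, then `G` has at least `(q-1)n - C(q,2)` edges. -/
theorem stmt9 (q n : ℕ) (hq : 4 ≤ q) (hn : 3 * q ≤ n)
    (G : SimpleGraph (Fin n)) [DecidableRel G.Adj]
    (hconn : G.Connected)
    (hradle : ∃ v : Fin n, ∀ u : Fin n, G.dist v u ≤ 2)
    (hradge : ∀ v : Fin n, ∃ u : Fin n, 2 ≤ G.dist v u)
    (hclique : ∀ u v : Fin n, u ≠ v →
      ∃ S : Finset (Fin n), S.card = q - 2 ∧
        (∀ w ∈ S, G.Adj u w ∧ G.Adj v w) ∧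
        (∀ w ∈ S, ∀ w' ∈ S, w ≠ w' → G.Adj w w')) :
    (q - 1) * n - q.choose 2 ≤ G.edgeFinset.card :=
  stmt9_general q n hq hn G hradge hclique
end

section
/- Let q ≥ 4 and n ≥ 2q. If G is a graph on n vertices with rad(G) = 2, minimum degree δ(G) = q−1, and |N(u) ∩ N(v)| ≥ q−2 for all pairs of vertices u, v, then G has at least (q−1)n − C(q,2) edges. -/
/-!
Fix a vertex `v` of minimum degree `q - 1` and let `K = N[v]`, `B = V \ K`. A neighbour `a` of `v`
shares at least `q - 2` neighbours with `v`, all in `N(v) \ {a}`, so `K` is a `q`-clique; likewise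
every vertex of `B` misses at most one vertex of `N(v)`. Let `D ⊆ B` be the vertices missing one.
Summing degrees over `K` and `B` gives `2e(G) ≥ q(q - 1) + 2((q - 1)|B| - |D|) + 2e(G[B])`, so it
suffices that `G[B]` has at least `|D|` edges. Every vertex `u ∈ D` has a neighbour in `B`. If it
has only one, `w`, the common-neighbour condition forces every other vertex of `B` that misses a
neighbour of `u` in `N(v)` to be adjacent to `w`. As no vertex is universal, this gives `w` two
neighbours in `B` and, if `w ∈ D`, at least `q - 2 ≥ 2` neighbours in `B` that are not
themselves such leaves. A discharging argument concludes.
-/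

open Finset

namespace SimpleGraph

variable {V : Type*} {G : SimpleGraph V}

theorem IsClique.exists_notMem_not_adj {s : Finset V} (hs : G.IsClique (s : Set V))
    (hG : ∀ a, ∃ y ≠ a, ¬ G.Adj a y) {a : V} (ha : a ∈ s) : ∃ y ∉ s, ¬ G.Adj y a := by
  obtain ⟨y, hya, hay⟩ := hG a
  exact ⟨y, fun hy => hay (hs ha hy hya.symm), fun h => hay h.symm⟩

variable [Fintype V] [DecidableEq V] [DecidableRel G.Adj]

theorem sum_card_neighborFinset_inter_comm (s t : Finset V) :
    ∑ x ∈ s, #(G.neighborFinset x ∩ t) = ∑ y ∈ t, #(G.neighborFinset y ∩ s) := by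
  have hab : ∀ x, G.neighborFinset x ∩ t = t.bipartiteAbove G.Adj x := fun x => by
    ext; simp [and_comm]
  have hbe : ∀ y, G.neighborFinset y ∩ s = s.bipartiteBelow G.Adj y := fun y => by
    ext; simp [and_comm, G.adj_comm y]
  simp only [hab, hbe, sum_card_bipartiteAbove_eq_sum_card_bipartiteBelow]

theorem degree_eq_card_inter_add_card_inter_compl (s : Finset V) (x : V) :
    G.degree x = #(G.neighborFinset x ∩ s) + #(G.neighborFinset x ∩ sᶜ) := by
  rw [← sdiff_eq_inter_compl, card_inter_add_card_sdiff, card_neighborFinset_eq_degree]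

theorem two_mul_card_edgeFinset_eq (s : Finset V) :
    2 * #G.edgeFinset = ∑ x ∈ s, #(G.neighborFinset x ∩ s)
      + 2 * ∑ x ∈ sᶜ, #(G.neighborFinset x ∩ s)
      + ∑ x ∈ sᶜ, #(G.neighborFinset x ∩ sᶜ) := by
  rw [← sum_degrees_eq_twice_card_edges, ← sum_add_sum_compl s]
  simp only [degree_eq_card_inter_add_card_inter_compl s, sum_add_distrib]
  rw [sum_card_neighborFinset_inter_comm s sᶜ]
  ring

theorem IsClique.neighborFinset_inter_eq_erase {s : Finset V} (hs : G.IsClique (s : Set V))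
    {x : V} (hx : x ∈ s) : G.neighborFinset x ∩ s = s.erase x := by
  ext y
  simp only [mem_inter, mem_neighborFinset, mem_erase]
  exact ⟨fun h => ⟨h.1.ne', h.2⟩, fun h => ⟨hs hx h.2 h.1.symm, h.2⟩⟩

theorem IsClique.sum_card_neighborFinset_inter {s : Finset V} (hs : G.IsClique (s : Set V)) :
    ∑ x ∈ s, #(G.neighborFinset x ∩ s) = #s * (#s - 1) := by
  rw [sum_congr rfl fun x hx => by rw [hs.neighborFinset_inter_eq_erase hx, card_erase_of_mem hx],
    sum_const, smul_eq_mul]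

variable (G) in
def closedNeighborFinset (v : V) : Finset V := insert v (G.neighborFinset v)

theorem card_closedNeighborFinset (v : V) :
    #(G.closedNeighborFinset v) = G.degree v + 1 := by
  rw [closedNeighborFinset, card_insert_of_notMem (by simp), card_neighborFinset_eq_degree]

theorem not_adj_of_notMem_closedNeighborFinset {v x : V} (hx : x ∉ G.closedNeighborFinset v) :
    ¬ G.Adj x v := fun h => hx (mem_insert_of_mem ((mem_neighborFinset _ _ _).2 h.symm))

theorem neighborFinset_inter_closedNeighborFinset {v x : V}
    (hx : x ∉ G.closedNeighborFinset v) :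
    G.neighborFinset x ∩ G.closedNeighborFinset v = G.neighborFinset x ∩ G.neighborFinset v :=
  inter_insert_of_notMem fun h => not_adj_of_notMem_closedNeighborFinset hx
    ((mem_neighborFinset _ _ _).1 h)

theorem card_inter_closedNeighborFinset_add_card_sdiff {v x : V}
    (hx : x ∉ G.closedNeighborFinset v) :
    #(G.neighborFinset x ∩ G.closedNeighborFinset v) + #(G.neighborFinset v \ G.neighborFinset x)
      = G.degree v := by
  rw [neighborFinset_inter_closedNeighborFinset hx, inter_comm, card_inter_add_card_sdiff,
    card_neighborFinset_eq_degree]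

variable (G) in
def deficient (v : V) : Finset V :=
  {x ∈ (G.closedNeighborFinset v)ᶜ | ¬ G.neighborFinset v ⊆ G.neighborFinset x}

variable (G) in
def deficientLeaf (v : V) : Finset V :=
  {x ∈ G.deficient v | #(G.neighborFinset x ∩ (G.closedNeighborFinset v)ᶜ) = 1}

theorem deficient_subset_compl (v : V) : G.deficient v ⊆ (G.closedNeighborFinset v)ᶜ :=
  filter_subset _ _

theorem notMem_closedNeighborFinset_of_mem_deficient {v x : V} (hx : x ∈ G.deficient v) :
    x ∉ G.closedNeighborFinset v :=
  mem_compl.1 (deficient_subset_compl v hx)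

theorem mem_deficient_of_mem_deficientLeaf {v x : V} (hx : x ∈ G.deficientLeaf v) :
    x ∈ G.deficient v :=
  (mem_filter.1 hx).1

theorem deficientLeaf_subset_compl (v : V) :
    G.deficientLeaf v ⊆ (G.closedNeighborFinset v)ᶜ :=
  (filter_subset _ _).trans (deficient_subset_compl v)

section CommonNeighbors

variable {q : ℕ} {v : V}

theorem isClique_closedNeighborFinset
    (hcommon : ∀ x y, x ≠ y → q - 2 ≤ #(G.neighborFinset x ∩ G.neighborFinset y))
    (hv : G.degree v = q - 1) : G.IsClique (G.closedNeighborFinset v : Set V) := by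
  have hA : ∀ a ∈ G.neighborFinset v, (G.neighborFinset v).erase a ⊆ G.neighborFinset a := by
    intro a ha
    have hsub : G.neighborFinset v ∩ G.neighborFinset a ⊆ (G.neighborFinset v).erase a :=
      fun z hz => mem_erase.2
        ⟨((mem_neighborFinset _ _ _).1 (mem_inter.1 hz).2).ne', (mem_inter.1 hz).1⟩
    have hcard : #((G.neighborFinset v).erase a)
        ≤ #(G.neighborFinset v ∩ G.neighborFinset a) := by
      have := hcommon v a ((mem_neighborFinset _ _ _).1 ha).ne
      rw [card_erase_of_mem ha, card_neighborFinset_eq_degree, hv]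
      omega
    rw [← eq_of_subset_of_card_le hsub hcard]
    exact inter_subset_right
  rw [closedNeighborFinset, coe_insert, isClique_insert]
  exact ⟨fun a ha b hb hab =>
    (mem_neighborFinset _ _ _).1 (hA a ha (mem_erase.2 ⟨hab.symm, hb⟩)),
    fun b hb _ => (mem_neighborFinset _ _ _).1 hb⟩

theorem card_sdiff_neighborFinset_le_one
    (hcommon : ∀ x y, x ≠ y → q - 2 ≤ #(G.neighborFinset x ∩ G.neighborFinset y))
    (hv : G.degree v = q - 1) {x : V} (hx : x ∉ G.closedNeighborFinset v) :
    #(G.neighborFinset v \ G.neighborFinset x) ≤ 1 := by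
  have hxv : x ≠ v := fun h => hx (h ▸ mem_insert_self _ _)
  have := hcommon x v hxv
  have := card_sdiff_add_card_inter (G.neighborFinset v) (G.neighborFinset x)
  rw [card_neighborFinset_eq_degree, hv, inter_comm] at this
  omega

theorem eq_of_not_adj_of_not_adj
    (hcommon : ∀ x y, x ≠ y → q - 2 ≤ #(G.neighborFinset x ∩ G.neighborFinset y))
    (hv : G.degree v = q - 1) {x a b : V} (hx : x ∉ G.closedNeighborFinset v)
    (ha : a ∈ G.neighborFinset v) (hb : b ∈ G.neighborFinset v)
    (hxa : ¬ G.Adj x a) (hxb : ¬ G.Adj x b) : a = b :=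
  card_le_one.1 (card_sdiff_neighborFinset_le_one hcommon hv hx) a (by simp [ha, hxa]) b
    (by simp [hb, hxb])

theorem card_inter_closedNeighborFinset_add_one_of_mem_deficient
    (hcommon : ∀ x y, x ≠ y → q - 2 ≤ #(G.neighborFinset x ∩ G.neighborFinset y))
    (hv : G.degree v = q - 1) {x : V} (hx : x ∈ G.deficient v) :
    #(G.neighborFinset x ∩ G.closedNeighborFinset v) + 1 = q - 1 := by
  have hxK := notMem_closedNeighborFinset_of_mem_deficient hx
  have hpos : 0 < #(G.neighborFinset v \ G.neighborFinset x) :=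
    card_pos.2 (sdiff_nonempty.2 (mem_filter.1 hx).2)
  have := card_sdiff_neighborFinset_le_one hcommon hv hxK
  have := card_inter_closedNeighborFinset_add_card_sdiff hxK
  omega

theorem sum_card_inter_closedNeighborFinset_add_card_deficient
    (hcommon : ∀ x y, x ≠ y → q - 2 ≤ #(G.neighborFinset x ∩ G.neighborFinset y))
    (hv : G.degree v = q - 1) :
    ∑ x ∈ (G.closedNeighborFinset v)ᶜ, #(G.neighborFinset x ∩ G.closedNeighborFinset v)
      + #(G.deficient v) = (q - 1) * #(G.closedNeighborFinset v)ᶜ := by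
  have hdef : ∀ x ∈ (G.closedNeighborFinset v)ᶜ,
      #(G.neighborFinset v \ G.neighborFinset x) = if x ∈ G.deficient v then 1 else 0 := by
    intro x hx
    have hxK := mem_compl.1 hx
    have := card_sdiff_neighborFinset_le_one hcommon hv hxK
    by_cases hD : x ∈ G.deficient v
    · have := card_pos.2 (sdiff_nonempty.2 (mem_filter.1 hD).2)
      rw [if_pos hD]
      omega
    · rw [if_neg hD, card_eq_zero, sdiff_eq_empty_iff_subset]
      by_contra h
      exact hD (mem_filter.2 ⟨hx, h⟩)
  have hD : #(G.deficient v)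
      = ∑ x ∈ (G.closedNeighborFinset v)ᶜ, #(G.neighborFinset v \ G.neighborFinset x) := by
    rw [sum_congr rfl hdef, sum_ite_mem, inter_eq_right.2 (deficient_subset_compl v), sum_const,
      smul_eq_mul, mul_one]
  rw [hD, ← sum_add_distrib, sum_congr rfl fun x hx =>
    card_inter_closedNeighborFinset_add_card_sdiff (mem_compl.1 hx), sum_const, smul_eq_mul, hv,
    mul_comm]

theorem eq_of_adj_of_mem_deficientLeaf {u w z : V} (hu : u ∈ G.deficientLeaf v)
    (huw : G.Adj u w) (hwK : w ∉ G.closedNeighborFinset v)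
    (huz : G.Adj u z) (hzK : z ∉ G.closedNeighborFinset v) : z = w :=
  card_le_one.1 (mem_filter.1 hu).2.le z (by simp [huz, hzK]) w (by simp [huw, hwK])

theorem adj_of_mem_deficientLeaf
    (hcommon : ∀ x y, x ≠ y → q - 2 ≤ #(G.neighborFinset x ∩ G.neighborFinset y))
    (hv : G.degree v = q - 1) (hq : 3 ≤ q) {u w x a : V} (hu : u ∈ G.deficientLeaf v)
    (huw : G.Adj u w) (hwK : w ∉ G.closedNeighborFinset v) (hxu : x ≠ u)
    (haK : a ∈ G.closedNeighborFinset v) (hua : G.Adj u a) (hxa : ¬ G.Adj x a) :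
    G.Adj x w := by
  have hsub : G.neighborFinset u ∩ G.neighborFinset x ∩ G.closedNeighborFinset v
      ⊆ (G.neighborFinset u ∩ G.closedNeighborFinset v).erase a := by
    intro z hz
    simp only [mem_inter, mem_erase, mem_neighborFinset] at hz ⊢
    exact ⟨fun h => hxa (h ▸ hz.1.2), hz.1.1, hz.2⟩
  have hlt : #(G.neighborFinset u ∩ G.neighborFinset x ∩ G.closedNeighborFinset v)
      < #(G.neighborFinset u ∩ G.neighborFinset x) := by
    have := card_le_card hsub
    have := hcommon u x hxu.symm
    have := card_inter_closedNeighborFinset_add_one_of_mem_deficient hcommon hv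
      (mem_deficient_of_mem_deficientLeaf hu)
    rw [card_erase_of_mem (mem_inter.2 ⟨(mem_neighborFinset _ _ _).2 hua, haK⟩)] at *
    omega
  obtain ⟨z, hzC, hzCK⟩ := exists_mem_notMem_of_card_lt_card hlt
  have hzK : z ∉ G.closedNeighborFinset v := fun h => hzCK (mem_inter.2 ⟨hzC, h⟩)
  simp only [mem_inter, mem_neighborFinset] at hzC
  exact eq_of_adj_of_mem_deficientLeaf hu huw hwK hzC.1 hzK ▸ hzC.2

theorem inter_closedNeighborFinset_subset_of_mem_deficientLeaf
    (hcommon : ∀ x y, x ≠ y → q - 2 ≤ #(G.neighborFinset x ∩ G.neighborFinset y))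
    (hv : G.degree v = q - 1) {u w : V} (hu : u ∈ G.deficientLeaf v)
    (huw : G.Adj u w) (hwK : w ∉ G.closedNeighborFinset v) :
    G.neighborFinset u ∩ G.closedNeighborFinset v ⊆ G.neighborFinset w := by
  have hsub : G.neighborFinset u ∩ G.neighborFinset w
      ⊆ G.neighborFinset u ∩ G.closedNeighborFinset v := by
    intro z hz
    simp only [mem_inter, mem_neighborFinset] at hz ⊢
    refine ⟨hz.1, by_contra fun hzK => ?_⟩
    exact G.irrefl (eq_of_adj_of_mem_deficientLeaf hu huw hwK hz.1 hzK ▸ hz.2)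
  have hcard := card_inter_closedNeighborFinset_add_one_of_mem_deficient hcommon hv
    (mem_deficient_of_mem_deficientLeaf hu)
  have := hcommon u w huw.ne
  rw [← eq_of_subset_of_card_le hsub (by omega)]
  exact inter_subset_right

theorem two_le_card_of_adj_mem_deficientLeaf
    (hcommon : ∀ x y, x ≠ y → q - 2 ≤ #(G.neighborFinset x ∩ G.neighborFinset y))
    (hv : G.degree v = q - 1) (hq : 3 ≤ q) (hG : ∀ a, ∃ y ≠ a, ¬ G.Adj a y) {u w : V}
    (hu : u ∈ G.deficientLeaf v) (huw : G.Adj u w) (hwK : w ∉ G.closedNeighborFinset v) :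
    2 ≤ #(G.neighborFinset w ∩ (G.closedNeighborFinset v)ᶜ) := by
  have hcard := card_inter_closedNeighborFinset_add_one_of_mem_deficient hcommon hv
    (mem_deficient_of_mem_deficientLeaf hu)
  obtain ⟨a, ha⟩ :=
    card_pos.1 (show 0 < #(G.neighborFinset u ∩ G.closedNeighborFinset v) by omega)
  rw [mem_inter, mem_neighborFinset] at ha
  obtain ⟨y, hyK, hya⟩ :=
    (isClique_closedNeighborFinset hcommon hv).exists_notMem_not_adj hG ha.2
  have hyu : y ≠ u := fun h => hya (h ▸ ha.1)
  have hyw := adj_of_mem_deficientLeaf hcommon hv hq hu huw hwK hyu ha.2 ha.1 hya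
  have hpair : {u, y} ⊆ G.neighborFinset w ∩ (G.closedNeighborFinset v)ᶜ := by
    intro z hz
    rcases mem_insert.1 hz with rfl | hz
    · simp [huw.symm, notMem_closedNeighborFinset_of_mem_deficient
        (mem_deficient_of_mem_deficientLeaf hu)]
    · rw [mem_singleton.1 hz]
      simp [hyw.symm, hyK]
  simpa [card_pair hyu.symm] using card_le_card hpair

theorem le_card_inter_compl_sdiff_deficientLeaf
    (hcommon : ∀ x y, x ≠ y → q - 2 ≤ #(G.neighborFinset x ∩ G.neighborFinset y))
    (hv : G.degree v = q - 1) (hq : 3 ≤ q) (hG : ∀ a, ∃ y ≠ a, ¬ G.Adj a y) {u w : V}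
    (hw : w ∈ G.deficient v) (hu : u ∈ G.deficientLeaf v) (hwu : G.Adj w u) :
    q - 2 ≤ #((G.neighborFinset w ∩ (G.closedNeighborFinset v)ᶜ) \ G.deficientLeaf v) := by
  have hwK := notMem_closedNeighborFinset_of_mem_deficient hw
  have huK := notMem_closedNeighborFinset_of_mem_deficient (mem_deficient_of_mem_deficientLeaf hu)
  have hcard := card_inter_closedNeighborFinset_add_one_of_mem_deficient hcommon hv
    (mem_deficient_of_mem_deficientLeaf hu)
  have huw := inter_closedNeighborFinset_subset_of_mem_deficientLeaf hcommon hv hu hwu.symm hwK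
  have hnbr : ∀ {a}, a ∈ G.neighborFinset u ∩ G.closedNeighborFinset v →
      a ∈ G.neighborFinset v := fun ha =>
    (mem_inter.1 (neighborFinset_inter_closedNeighborFinset huK ▸ ha)).2
  suffices #(G.neighborFinset u ∩ G.closedNeighborFinset v)
      ≤ #((G.neighborFinset w ∩ (G.closedNeighborFinset v)ᶜ) \ G.deficientLeaf v) by omega
  refine card_le_card_of_forall_subsingleton (fun a y => ¬ G.Adj y a) (fun a ha => ?_)
    fun y hy a ha b hb => ?_
  · have hua := (mem_neighborFinset _ _ _).1 (mem_inter.1 ha).1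
    obtain ⟨y, hyK, hya⟩ :=
      (isClique_closedNeighborFinset hcommon hv).exists_notMem_not_adj hG (mem_inter.1 ha).2
    have hyw := adj_of_mem_deficientLeaf hcommon hv hq hu hwu.symm hwK
      (by rintro rfl; exact hya hua) (mem_inter.1 ha).2 hua hya
    refine ⟨y, mem_sdiff.2 ⟨by simp [hyw.symm, hyK], fun hy => ?_⟩, hya⟩
    -- were `y` a leaf, `w` would see `a` (as `u` does) and, like `y`, the rest of `N(v)`
    refine (mem_filter.1 hw).2 fun b hb => ?_
    by_cases hba : b = a
    · exact hba ▸ huw ha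
    · refine inter_closedNeighborFinset_subset_of_mem_deficientLeaf hcommon hv hy hyw hwK
        (mem_inter.2 ⟨?_, mem_insert_of_mem hb⟩)
      rw [mem_neighborFinset]
      by_contra hyb
      exact hba (eq_of_not_adj_of_not_adj hcommon hv hyK hb (hnbr ha) hyb hya)
  · have hyK := mem_compl.1 (mem_inter.1 (mem_sdiff.1 hy).1).2
    exact eq_of_not_adj_of_not_adj hcommon hv hyK (hnbr ha.1) (hnbr hb.1) ha.2 hb.2

/-- Discharging: every vertex gives one unit of its degree outside `N[v]` to each adjacent
deficient leaf; afterwards every deficient vertex still holds at least two units. -/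
theorem two_mul_ite_mem_deficient_add_card_le
    (hcommon : ∀ x y, x ≠ y → q - 2 ≤ #(G.neighborFinset x ∩ G.neighborFinset y))
    (hv : G.degree v = q - 1) (hdeg : ∀ x, q - 1 ≤ G.degree x) (hq : 4 ≤ q)
    (hG : ∀ a, ∃ y ≠ a, ¬ G.Adj a y) (x : V) :
    2 * (if x ∈ G.deficient v then 1 else 0) + #(G.neighborFinset x ∩ G.deficientLeaf v)
      ≤ #(G.neighborFinset x ∩ (G.closedNeighborFinset v)ᶜ)
        + if x ∈ G.deficientLeaf v then 1 else 0 := by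
  have hsplit := card_inter_add_card_sdiff
    (G.neighborFinset x ∩ (G.closedNeighborFinset v)ᶜ) (G.deficientLeaf v)
  rw [inter_assoc, inter_eq_right.2 (deficientLeaf_subset_compl v)] at hsplit
  by_cases hL : x ∈ G.deficientLeaf v
  · have hempty : G.neighborFinset x ∩ G.deficientLeaf v = ∅ := by
      refine eq_empty_of_forall_notMem fun u hu => ?_
      rw [mem_inter, mem_neighborFinset] at hu
      have := two_le_card_of_adj_mem_deficientLeaf hcommon hv (by omega) hG hL hu.1
        (mem_compl.1 (deficientLeaf_subset_compl v hu.2))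
      have := (mem_filter.1 hu.2).2
      omega
    rw [if_pos (mem_deficient_of_mem_deficientLeaf hL), if_pos hL, hempty, (mem_filter.1 hL).2,
      card_empty]
  rw [if_neg hL]
  by_cases hD : x ∈ G.deficient v
  · rw [if_pos hD]
    obtain ⟨u, hu⟩ | hempty :=
      (G.neighborFinset x ∩ G.deficientLeaf v).eq_empty_or_nonempty.symm
    · rw [mem_inter, mem_neighborFinset] at hu
      have := le_card_inter_compl_sdiff_deficientLeaf hcommon hv (by omega) hG hD hu.2 hu.1
      omega
    · have hpos := card_inter_closedNeighborFinset_add_one_of_mem_deficient hcommon hv hD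
      have := degree_eq_card_inter_add_card_inter_compl (G := G) (G.closedNeighborFinset v) x
        ▸ hdeg x
      have : #(G.neighborFinset x ∩ (G.closedNeighborFinset v)ᶜ) ≠ 1 := fun h =>
        hL (mem_filter.2 ⟨hD, h⟩)
      rw [hempty, card_empty]
      omega
  · rw [if_neg hD]
    omega

theorem two_mul_card_deficient_le_sum
    (hcommon : ∀ x y, x ≠ y → q - 2 ≤ #(G.neighborFinset x ∩ G.neighborFinset y))
    (hv : G.degree v = q - 1) (hdeg : ∀ x, q - 1 ≤ G.degree x) (hq : 4 ≤ q)
    (hG : ∀ a, ∃ y ≠ a, ¬ G.Adj a y) :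
    2 * #(G.deficient v)
      ≤ ∑ x ∈ (G.closedNeighborFinset v)ᶜ,
          #(G.neighborFinset x ∩ (G.closedNeighborFinset v)ᶜ) := by
  have hsum := sum_le_sum fun x (_ : x ∈ (G.closedNeighborFinset v)ᶜ) =>
    two_mul_ite_mem_deficient_add_card_le hcommon hv hdeg hq hG x
  have hleaf : ∑ x ∈ (G.closedNeighborFinset v)ᶜ, #(G.neighborFinset x ∩ G.deficientLeaf v)
      = #(G.deficientLeaf v) := by
    rw [sum_card_neighborFinset_inter_comm (G := G), card_eq_sum_ones]
    exact sum_congr rfl fun u hu => (mem_filter.1 hu).2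
  simp only [sum_add_distrib, ← mul_sum, sum_ite_mem, inter_eq_right.2 (deficient_subset_compl v),
    inter_eq_right.2 (deficientLeaf_subset_compl v), hleaf, sum_const, smul_eq_mul,
    mul_one] at hsum
  omega

theorem le_card_edgeFinset_of_degree_eq
    (hcommon : ∀ x y, x ≠ y → q - 2 ≤ #(G.neighborFinset x ∩ G.neighborFinset y))
    (hv : G.degree v = q - 1) (hdeg : ∀ x, q - 1 ≤ G.degree x) (hq : 4 ≤ q)
    (hG : ∀ a, ∃ y ≠ a, ¬ G.Adj a y) :
    (q - 1) * Fintype.card V - q.choose 2 ≤ #G.edgeFinset := by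
  have hedges := G.two_mul_card_edgeFinset_eq (G.closedNeighborFinset v)
  have hclique := (isClique_closedNeighborFinset hcommon hv).sum_card_neighborFinset_inter
  have hcross := sum_card_inter_closedNeighborFinset_add_card_deficient hcommon hv
  have houter := two_mul_card_deficient_le_sum hcommon hv hdeg hq hG
  have hK : #(G.closedNeighborFinset v) = q := by
    rw [card_closedNeighborFinset, hv]
    omega
  have hKc := card_compl_add_card (G.closedNeighborFinset v)
  have hchoose : q.choose 2 * 2 = q * (q - 1) := by
    rw [Nat.choose_two_right, Nat.div_two_mul_two_of_even (Nat.even_mul_pred_self q)]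
  have hsplit :
      (q - 1) * Fintype.card V = (q - 1) * #(G.closedNeighborFinset v)ᶜ + q * (q - 1) := by
    rw [← hKc, hK]
    ring
  rw [hK] at hclique
  omega

end CommonNeighbors

end SimpleGraph

theorem stmt10_general (q n : ℕ) (hq : 4 ≤ q)
    (G : SimpleGraph (Fin n)) [DecidableRel G.Adj]
    (hradge : ∀ v : Fin n, ∃ u : Fin n, 2 ≤ G.dist v u)
    (hmindeg : G.minDegree = q - 1)
    (hcommon : ∀ u v : Fin n, u ≠ v →
      q - 2 ≤ (G.neighborFinset u ∩ G.neighborFinset v).card) :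
    (q - 1) * n - q.choose 2 ≤ G.edgeFinset.card := by
  have : Nonempty (Fin n) := by
    by_contra h
    have : IsEmpty (Fin n) := not_nonempty_iff.1 h
    have := G.minDegree_of_subsingleton
    omega
  have hG : ∀ a, ∃ y ≠ a, ¬ G.Adj a y := fun a => by
    obtain ⟨y, hy⟩ := hradge a
    refine ⟨y, ?_, fun h => ?_⟩
    · rintro rfl
      simp at hy
    · rw [SimpleGraph.dist_eq_one_iff_adj.2 h] at hy
      omega
  obtain ⟨v, hv⟩ := G.exists_minimal_degree_vertex
  simpa using SimpleGraph.le_card_edgeFinset_of_degree_eq hcommon (hv ▸ hmindeg)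
    (fun x => hmindeg ▸ G.minDegree_le_degree x) hq hG

/-- Let `q ≥ 4`, `n ≥ 2q`. If `G` is a graph on `n` vertices with radius 2,
minimum degree `q-1`, and every two vertices have at least `q-2` common
neighbors, then `G` has at least `(q-1)n - C(q,2)` edges. -/
theorem stmt10 (q n : ℕ) (hq : 4 ≤ q) (hn : 2 * q ≤ n)
    (G : SimpleGraph (Fin n)) [DecidableRel G.Adj]
    (hconn : G.Connected)
    (hradle : ∃ v : Fin n, ∀ u : Fin n, G.dist v u ≤ 2)
    (hradge : ∀ v : Fin n, ∃ u : Fin n, 2 ≤ G.dist v u)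
    (hmindeg : G.minDegree = q - 1)
    (hcommon : ∀ u v : Fin n, u ≠ v →
      q - 2 ≤ (G.neighborFinset u ∩ G.neighborFinset v).card) :
    (q - 1) * n - q.choose 2 ≤ G.edgeFinset.card :=
  stmt10_general q n hq G hradge hmindeg hcommon
end

section
/- If G is an n-vertex graph with diameter 2 and radius 2 satisfying the triangle-property (every edge lies in a triangle), then G has at least 2n − 3 edges. -/
/-!
If every two distinct vertices have a common neighbour and no vertex is adjacent to all others,
then `∑ deg ≥ 4n - 6`; we argue on a vertex `v` of minimum degree `δ ≥ 2`.

* `δ ≥ 4`: immediate.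
* `δ = 3`, `N(v) = {a, b, c}`: every vertex other than `v` has a neighbour in `N(v)`, and
  `N(v)` spans at least two edges, so `deg a + deg b + deg c ≥ n + 3`.
* `δ = 2`, `N(v) = {a, b}`: then `a ~ b`, and every vertex of the set `S` of non-neighbours of
  `v` is adjacent to `a` or `b`. Let `A` (resp. `B`) be the vertices of `S` adjacent to `a` only
  (resp. `b` only). Counting degrees reduces the claim to `2 (|A| + |B|) ≤ ∑_{x ∈ S} deg_S x`.
  Every vertex of `A ∪ B` has a neighbour in `S`, and a vertex of `A` whose only neighbour in `S`
  is `w` forces `w` to be adjacent to all of `B`, since every vertex of `B` shares a neighbour in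
  `S` with it. So such a pendant vertex can borrow one from `w` unless `B = {z}`, in which case
  `z` and a neighbour of `z` outside `A ∪ B` pay for the deficit.
-/

open Finset

namespace SimpleGraph

variable {V : Type*} {G : SimpleGraph V} {S T P A B : Finset V} {v w x y z a b : V}

lemma Connected.exists_adj_adj_of_dist_le_two (hconn : G.Connected) (hxy : x ≠ y)
    (hadj : ¬G.Adj x y) (hdist : G.dist x y ≤ 2) : ∃ w, G.Adj x w ∧ G.Adj y w := by
  have h0 : G.dist x y ≠ 0 := hconn.dist_eq_zero_iff.not.mpr hxy
  have h1 : G.dist x y ≠ 1 := dist_eq_one_iff_adj.not.mpr hadj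
  have h2 : G.edist x y = 2 := by
    rw [← (hconn.preconnected x y).coe_dist_eq_edist, show G.dist x y = 2 by omega]
    rfl
  obtain ⟨w, hw⟩ := (edist_eq_two_iff.mp h2).2.2
  exact ⟨w, G.mem_commonNeighbors.mp hw⟩

structure LinkedPair (G : SimpleGraph V) (S A B : Finset V) : Prop where
  subset_left : A ⊆ S
  subset_right : B ⊆ S
  disjoint : Disjoint A B
  nonempty_left : A.Nonempty
  nonempty_right : B.Nonempty
  exists_adj_left : ∀ x ∈ A, ∃ y ∈ S, G.Adj x y ∧ y ∉ B
  exists_adj_right : ∀ x ∈ B, ∃ y ∈ S, G.Adj x y ∧ y ∉ A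
  exists_common_adj : ∀ x ∈ A, ∀ t ∈ B, ∃ y ∈ S, G.Adj x y ∧ G.Adj t y

lemma LinkedPair.symm (h : G.LinkedPair S A B) : G.LinkedPair S B A where
  subset_left := h.subset_right
  subset_right := h.subset_left
  disjoint := h.disjoint.symm
  nonempty_left := h.nonempty_right
  nonempty_right := h.nonempty_left
  exists_adj_left := h.exists_adj_right
  exists_adj_right := h.exists_adj_left
  exists_common_adj x hx t ht := by
    obtain ⟨y, hy, hty, hxy⟩ := h.exists_common_adj t ht x hx
    exact ⟨y, hy, hxy, hty⟩

section Decidable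

variable [DecidableRel G.Adj]

def neighborsIn (G : SimpleGraph V) [DecidableRel G.Adj] (S : Finset V) (x : V) : Finset V :=
  {y ∈ S | G.Adj x y}

@[simp]
lemma mem_neighborsIn : y ∈ G.neighborsIn S x ↔ y ∈ S ∧ G.Adj x y := mem_filter

lemma disjoint_neighborsIn (hST : Disjoint S T) :
    Disjoint (G.neighborsIn S x) (G.neighborsIn T x) :=
  disjoint_filter_filter hST

lemma sum_card_neighborsIn_comm (S T : Finset V) :
    ∑ x ∈ S, #(G.neighborsIn T x) = ∑ y ∈ T, #(G.neighborsIn S y) := by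
  simpa [bipartiteAbove, bipartiteBelow, neighborsIn, adj_comm] using
    sum_card_bipartiteAbove_eq_sum_card_bipartiteBelow (s := S) (t := T) (r := G.Adj)

lemma neighborsIn_univ [Fintype V] : G.neighborsIn univ x = G.neighborFinset x := by ext; simp

lemma exists_adj_mem_neighborFinset [Fintype V]
    (hcn : ∀ u w : V, u ≠ w → ∃ x, G.Adj u x ∧ G.Adj w x)
    (hx : x ≠ v) : ∃ y ∈ G.neighborFinset v, G.Adj x y := by
  obtain ⟨y, hvy, hxy⟩ := hcn v x hx.symm
  exact ⟨y, (mem_neighborFinset _ _ _).mpr hvy, hxy⟩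

lemma two_le_degree [Fintype V] (hcn : ∀ u w : V, u ≠ w → ∃ x, G.Adj u x ∧ G.Adj w x)
    (hnd : ∀ w : V, ∃ u, u ≠ w ∧ ¬G.Adj w u) (v : V) : 2 ≤ G.degree v := by
  obtain ⟨u, huv, -⟩ := hnd v
  obtain ⟨x, hvx, -⟩ := hcn v u huv.symm
  obtain ⟨u', -, hxu'⟩ := hnd x
  obtain ⟨y, hvy, hu'y⟩ := hcn v u' fun e => hxu' (e ▸ hvx.symm)
  rw [← card_neighborFinset_eq_degree]
  exact one_lt_card.mpr ⟨x, by simpa, y, by simpa, fun e => hxu' (e ▸ hu'y.symm)⟩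

namespace LinkedPair

lemma card_neighborsIn_pos (h : G.LinkedPair S A B) (hx : x ∈ A) : 0 < #(G.neighborsIn S x) := by
  obtain ⟨y, hy, hxy, -⟩ := h.exists_adj_left x hx
  exact card_pos.mpr ⟨y, mem_neighborsIn.mpr ⟨hy, hxy⟩⟩

lemma adj_of_neighborsIn_eq_singleton (h : G.LinkedPair S A B) (hx : x ∈ A)
    (hw : G.neighborsIn S x = {w}) : w ∉ B ∧ ∀ t ∈ B, G.Adj w t := by
  have eq_w : ∀ {y}, y ∈ S → G.Adj x y → y = w := fun hy hxy =>
    mem_singleton.mp (hw ▸ mem_neighborsIn.mpr ⟨hy, hxy⟩)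
  obtain ⟨y, hy, hxy, hyB⟩ := h.exists_adj_left x hx
  refine ⟨eq_w hy hxy ▸ hyB, fun t ht => ?_⟩
  obtain ⟨y', hy', hxy', hty'⟩ := h.exists_common_adj x hx t ht
  exact (eq_w hy' hxy' ▸ hty').symm

lemma two_le_card_neighborsIn_of_neighborsIn_eq_singleton (h : G.LinkedPair S A B) (hx : x ∈ A)
    (hw : G.neighborsIn S x = {w}) : 2 ≤ #(G.neighborsIn S w) := by
  obtain ⟨t, ht⟩ := h.nonempty_right
  have hxw : G.Adj x w := (mem_neighborsIn.mp (hw ▸ mem_singleton_self w)).2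
  have hwt := (h.adj_of_neighborsIn_eq_singleton hx hw).2 t ht
  have hxt : x ≠ t := fun hxt => Finset.disjoint_left.mp h.disjoint hx (hxt ▸ ht)
  refine one_lt_card.mpr ⟨x, ?_, t, ?_, hxt⟩
  · exact mem_neighborsIn.mpr ⟨h.subset_left hx, hxw.symm⟩
  · exact mem_neighborsIn.mpr ⟨h.subset_right ht, hwt⟩

end LinkedPair

variable [DecidableEq V]

lemma neighborsIn_union : G.neighborsIn (S ∪ T) x = G.neighborsIn S x ∪ G.neighborsIn T x :=
  filter_union _ _ _

lemma neighborsIn_sdiff_of_forall_notMem (hT : ∀ y ∈ G.neighborsIn S x, y ∉ T) :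
    G.neighborsIn (S \ T) x = G.neighborsIn S x := by
  ext y
  simp only [mem_neighborsIn, mem_sdiff]
  exact ⟨fun hy => ⟨hy.1.1, hy.2⟩,
    fun hy => ⟨⟨hy.1, hT y (mem_neighborsIn.mpr hy)⟩, hy.2⟩⟩

lemma card_neighborsIn_add_card_neighborsIn_le_degree [Fintype V] (hST : Disjoint S T) (x : V) :
    #(G.neighborsIn S x) + #(G.neighborsIn T x) ≤ G.degree x := by
  rw [← card_union_of_disjoint (disjoint_neighborsIn hST), ← neighborsIn_union,
    ← card_neighborFinset_eq_degree]
  exact card_le_card fun y hy => by simp_all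

lemma sum_card_neighborsIn_eq_add (hPS : P ⊆ S) :
    ∑ x ∈ S, #(G.neighborsIn S x) =
      ∑ y ∈ P, #(G.neighborsIn S y) + ∑ x ∈ S, #(G.neighborsIn (S \ P) x) := by
  rw [sum_card_neighborsIn_comm P S, ← sum_add_distrib]
  refine sum_congr rfl fun x _ => ?_
  rw [← card_union_of_disjoint (disjoint_neighborsIn disjoint_sdiff), ← neighborsIn_union,
    union_sdiff_of_subset hPS]

lemma four_le_sum_card_neighborsIn_of_card_eq_three (hT : #T = 3)
    (h : ∀ y ∈ T, ∃ x ∈ T, G.Adj y x) : 4 ≤ ∑ y ∈ T, #(G.neighborsIn T y) := by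
  obtain ⟨a, b, c, hab, hac, hbc, rfl⟩ := card_eq_three.mp hT
  simp only [mem_insert, mem_singleton, forall_eq_or_imp, forall_eq, exists_eq_or_imp,
    exists_eq_left, G.irrefl, false_or] at h
  simp only [neighborsIn, card_filter, sum_insert, mem_insert, mem_singleton, hab, hac, hbc,
    sum_singleton, G.irrefl, if_false, or_self, not_false_eq_true]
  simp only [G.adj_comm b a, G.adj_comm c a, G.adj_comm c b] at h ⊢
  by_cases h₁ : G.Adj a b <;> by_cases h₂ : G.Adj a c <;> by_cases h₃ : G.Adj b c <;> simp_all

def pendants (G : SimpleGraph V) [DecidableRel G.Adj] (S A B : Finset V) : Finset V :=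
  {x ∈ A ∪ B | #(G.neighborsIn S x) = 1}

lemma pendants_comm : G.pendants S A B = G.pendants S B A := by
  rw [pendants, pendants, union_comm]

lemma pendants_subset : G.pendants S A B ⊆ A ∪ B := filter_subset _ _

lemma notMem_pendants_of_one_lt (hx : 1 < #(G.neighborsIn S x)) : x ∉ G.pendants S A B :=
  fun hxP => hx.ne' (mem_filter.mp hxP).2

namespace LinkedPair

lemma notMem_pendants_of_mem_neighborsIn (h : G.LinkedPair S A B) (hx : x ∈ G.pendants S A B)
    (hw : w ∈ G.neighborsIn S x) : w ∉ G.pendants S A B := by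
  obtain ⟨hxAB, hx1⟩ := mem_filter.mp hx
  obtain ⟨w', hw'⟩ := card_eq_one.mp hx1
  obtain rfl : w = w' := mem_singleton.mp (hw' ▸ hw)
  have h2 : 2 ≤ #(G.neighborsIn S w) := by
    rcases mem_union.mp hxAB with hxA | hxB
    · exact h.two_le_card_neighborsIn_of_neighborsIn_eq_singleton hxA hw'
    · exact h.symm.two_le_card_neighborsIn_of_neighborsIn_eq_singleton hxB hw'
  exact notMem_pendants_of_one_lt h2

lemma card_neighborsIn_sdiff_pendants_of_mem (h : G.LinkedPair S A B)
    (hx : x ∈ G.pendants S A B) :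
    #(G.neighborsIn (S \ G.pendants S A B) x) = 1 := by
  rw [neighborsIn_sdiff_of_forall_notMem fun _ => h.notMem_pendants_of_mem_neighborsIn hx]
  exact (mem_filter.mp hx).2

lemma two_le_card_neighborsIn_sdiff_pendants_or_subset (h : G.LinkedPair S A B) (hx : x ∈ A)
    (hxP : x ∉ G.pendants S A B) :
    2 ≤ #(G.neighborsIn (S \ G.pendants S A B) x) ∨
      B ⊆ G.neighborsIn (S \ G.pendants S A B) x := by
  set P := G.pendants S A B
  by_cases hp : ∃ y ∈ G.neighborsIn S x, y ∈ P
  · right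
    obtain ⟨y, hy, hyP⟩ := hp
    obtain ⟨hyAB, hy1⟩ := mem_filter.mp hyP
    have hxy : x ∈ G.neighborsIn S y :=
      mem_neighborsIn.mpr ⟨h.subset_left hx, (mem_neighborsIn.mp hy).2.symm⟩
    have hyx : G.neighborsIn S y = {x} := by
      obtain ⟨w, hw⟩ := card_eq_one.mp hy1
      rw [hw, mem_singleton] at hxy
      rwa [hxy]
    have hyA : y ∈ A := (mem_union.mp hyAB).resolve_right fun hyB =>
      (h.symm.adj_of_neighborsIn_eq_singleton hyB hyx).1 hx
    intro t ht
    have hxt := (h.adj_of_neighborsIn_eq_singleton hyA hyx).2 t ht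
    obtain ⟨y', hy', hty', hy'A⟩ := h.exists_adj_right t ht
    have htP : t ∉ P := notMem_pendants_of_one_lt <| one_lt_card.mpr
      ⟨x, mem_neighborsIn.mpr ⟨h.subset_left hx, hxt.symm⟩,
        y', mem_neighborsIn.mpr ⟨hy', hty'⟩, fun e => hy'A (e ▸ hx)⟩
    exact mem_neighborsIn.mpr ⟨mem_sdiff.mpr ⟨h.subset_right ht, htP⟩, hxt⟩
  · left
    push Not at hp
    have hne : #(G.neighborsIn S x) ≠ 1 := fun h1 =>
      hxP (mem_filter.mpr ⟨mem_union_left _ hx, h1⟩)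
    have hpos := h.card_neighborsIn_pos hx
    rw [neighborsIn_sdiff_of_forall_notMem hp]
    omega

lemma two_mul_card_union_le_of_forall_two_le (h : G.LinkedPair S A B)
    (hq : ∀ x ∈ A ∪ B, x ∉ G.pendants S A B →
      2 ≤ #(G.neighborsIn (S \ G.pendants S A B) x)) :
    2 * #(A ∪ B) ≤
      #(G.pendants S A B) + ∑ x ∈ S, #(G.neighborsIn (S \ G.pendants S A B) x) := by
  set P := G.pendants S A B
  have hpt : ∀ x ∈ A ∪ B, 2 ≤ #(G.neighborsIn (S \ P) x) + if x ∈ P then 1 else 0 := by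
    intro x hx
    by_cases hxP : x ∈ P
    · rw [h.card_neighborsIn_sdiff_pendants_of_mem hxP, if_pos hxP]
    · simpa [hxP] using hq x hx hxP
  calc 2 * #(A ∪ B) = ∑ x ∈ A ∪ B, 2 := by rw [sum_const, smul_eq_mul, mul_comm]
    _ ≤ ∑ x ∈ A ∪ B, (#(G.neighborsIn (S \ P) x) + if x ∈ P then 1 else 0) :=
      sum_le_sum hpt
    _ = #P + ∑ x ∈ A ∪ B, #(G.neighborsIn (S \ P) x) := by
      rw [sum_add_distrib, sum_boole, filter_mem_eq_inter, inter_eq_right.mpr pendants_subset,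
        Nat.cast_id, add_comm]
    _ ≤ #P + ∑ x ∈ S, #(G.neighborsIn (S \ P) x) := by
      gcongr
      exact union_subset h.subset_left h.subset_right

lemma card_neighborsIn_add_two_add_sum_le (h : G.LinkedPair S A {z})
    (hzP : z ∉ G.pendants S A {z}) :
    #(G.neighborsIn A z) + 2 + ∑ x ∈ A, #(G.neighborsIn (S \ G.pendants S A {z}) x) ≤
      ∑ x ∈ S, #(G.neighborsIn (S \ G.pendants S A {z}) x) := by
  set P := G.pendants S A {z}
  have hzS : z ∈ S := h.subset_right (mem_singleton_self z)
  have hzA : z ∉ A := Finset.disjoint_right.mp h.disjoint (mem_singleton_self z)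
  obtain ⟨x₀, hx₀S, hzx₀, hx₀A⟩ := h.exists_adj_right z (mem_singleton_self z)
  have hx₀z : x₀ ≠ z := (G.ne_of_adj hzx₀).symm
  have hx₀P : x₀ ∉ P := fun hx₀P => by
    rcases mem_union.mp (pendants_subset hx₀P) with hA | hB
    exacts [hx₀A hA, hx₀z (mem_singleton.mp hB)]
  -- a pendant vertex of `A` cannot hang on `z ∈ B`
  have hsub : insert x₀ (G.neighborsIn A z) ⊆ G.neighborsIn (S \ P) z := by
    refine insert_subset (mem_neighborsIn.mpr ⟨mem_sdiff.mpr ⟨hx₀S, hx₀P⟩, hzx₀⟩)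
      fun y hy => ?_
    obtain ⟨hyA, hzy⟩ := mem_neighborsIn.mp hy
    refine mem_neighborsIn.mpr ⟨mem_sdiff.mpr ⟨h.subset_left hyA, fun hyP => ?_⟩, hzy⟩
    obtain ⟨w, hw⟩ := card_eq_one.mp (mem_filter.mp hyP).2
    have hzw : z ∈ G.neighborsIn S y := mem_neighborsIn.mpr ⟨hzS, hzy.symm⟩
    rw [hw, mem_singleton] at hzw
    exact (h.adj_of_neighborsIn_eq_singleton hyA (hzw ▸ hw)).1 (mem_singleton_self z)
  have hz : #(G.neighborsIn A z) + 1 ≤ #(G.neighborsIn (S \ P) z) := by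
    rw [← card_insert_of_notMem fun hx₀ => hx₀A (mem_neighborsIn.mp hx₀).1]
    exact card_le_card hsub
  have hx₀ : 1 ≤ #(G.neighborsIn (S \ P) x₀) :=
    card_pos.mpr ⟨z, mem_neighborsIn.mpr ⟨mem_sdiff.mpr ⟨hzS, hzP⟩, hzx₀.symm⟩⟩
  calc #(G.neighborsIn A z) + 2 + ∑ x ∈ A, #(G.neighborsIn (S \ P) x)
      ≤ ∑ x ∈ insert x₀ (insert z A), #(G.neighborsIn (S \ P) x) := by
        rw [sum_insert (by simp [hx₀z, hx₀A]), sum_insert hzA]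
        omega
    _ ≤ ∑ x ∈ S, #(G.neighborsIn (S \ P) x) :=
        sum_le_sum_of_subset (insert_subset hx₀S (insert_subset hzS h.subset_left))

lemma two_mul_card_union_le_of_lt_two (h : G.LinkedPair S A B) (hxA : x ∈ A)
    (hxP : x ∉ G.pendants S A B) (hq : #(G.neighborsIn (S \ G.pendants S A B) x) < 2) :
    2 * #(A ∪ B) ≤
      #(G.pendants S A B) + ∑ x ∈ S, #(G.neighborsIn (S \ G.pendants S A B) x) := by
  set P := G.pendants S A B
  set q : V → ℕ := fun x => #(G.neighborsIn (S \ P) x)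
  have hB : B ⊆ G.neighborsIn (S \ P) x :=
    (h.two_le_card_neighborsIn_sdiff_pendants_or_subset hxA hxP).resolve_left (not_le.mpr hq)
  obtain ⟨z, rfl⟩ : ∃ z, B = {z} := card_eq_one.mp <|
    le_antisymm ((card_le_card hB).trans (Nat.le_of_lt_succ hq)) (card_pos.mpr h.nonempty_right)
  have hzP : z ∉ P := (mem_sdiff.mp (mem_neighborsIn.mp (hB (mem_singleton_self z))).1).2
  have hpt :
      ∀ y ∈ A, 2 ≤ q y + (if y ∈ P then 1 else 0) + (if G.Adj z y then 1 else 0) := by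
    intro y hy
    by_cases hyP : y ∈ P
    · have h1 : q y = 1 := h.card_neighborsIn_sdiff_pendants_of_mem hyP
      rw [if_pos hyP]
      omega
    · have key : 2 ≤ q y ∨ {z} ⊆ G.neighborsIn (S \ P) y :=
        h.two_le_card_neighborsIn_sdiff_pendants_or_subset hy hyP
      rcases key with h2 | hz
      · omega
      · have hz := mem_neighborsIn.mp (hz (mem_singleton_self z))
        rw [if_pos hz.2.symm]
        have : 1 ≤ q y := card_pos.mpr ⟨z, mem_neighborsIn.mpr hz⟩
        omega
  have hAP : #{x ∈ A | x ∈ P} ≤ #P := card_le_card fun x hx => (mem_filter.mp hx).2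
  have hS : #(G.neighborsIn A z) + 2 + ∑ x ∈ A, q x ≤ ∑ x ∈ S, q x :=
    h.card_neighborsIn_add_two_add_sum_le hzP
  calc 2 * #(A ∪ {z})
      = ∑ x ∈ A, 2 + 2 := by
        rw [card_union_of_disjoint h.disjoint, card_singleton, sum_const, smul_eq_mul]
        ring
    _ ≤ ∑ x ∈ A, (q x + (if x ∈ P then 1 else 0) + (if G.Adj z x then 1 else 0)) + 2 := by
        gcongr with x hx
        exact hpt x hx
    _ = ∑ x ∈ A, q x + #{x ∈ A | x ∈ P} + #(G.neighborsIn A z) + 2 := by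
        rw [sum_add_distrib, sum_add_distrib, sum_boole, sum_boole, Nat.cast_id, Nat.cast_id]
        rfl
    _ ≤ #P + ∑ x ∈ S, q x := by omega

theorem two_mul_card_add_card_le_sum_card_neighborsIn (h : G.LinkedPair S A B) :
    2 * (#A + #B) ≤ ∑ x ∈ S, #(G.neighborsIn S x) := by
  have hP : G.pendants S A B ⊆ S :=
    pendants_subset.trans (union_subset h.subset_left h.subset_right)
  have hP1 : ∑ y ∈ G.pendants S A B, #(G.neighborsIn S y) = #(G.pendants S A B) := by
    rw [card_eq_sum_ones]
    exact sum_congr rfl fun x hx => (mem_filter.mp hx).2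
  rw [sum_card_neighborsIn_eq_add hP, hP1, ← card_union_of_disjoint h.disjoint]
  by_cases hdef : ∃ x ∈ A ∪ B,
      x ∉ G.pendants S A B ∧ #(G.neighborsIn (S \ G.pendants S A B) x) < 2
  · obtain ⟨x, hx, hxP, hq⟩ := hdef
    rcases mem_union.mp hx with hxA | hxB
    · exact h.two_mul_card_union_le_of_lt_two hxA hxP hq
    · rw [pendants_comm] at hxP hq ⊢
      rw [union_comm]
      exact h.symm.two_mul_card_union_le_of_lt_two hxB hxP hq
  · push Not at hdef
    exact h.two_mul_card_union_le_of_forall_two_le hdef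

end LinkedPair

variable [Fintype V]

lemma four_mul_card_le_sum_degree_add_six_of_degree_eq_three
    (hcn : ∀ u w : V, u ≠ w → ∃ x, G.Adj u x ∧ G.Adj w x)
    (hmin : ∀ x, 3 ≤ G.degree x) (hv : G.degree v = 3) :
    4 * Fintype.card V ≤ ∑ x, G.degree x + 6 := by
  set T := G.neighborFinset v
  have hT : #T = 3 := by rwa [card_neighborFinset_eq_degree]
  have hvT : v ∉ T := by simp [T]
  have hTT : 4 ≤ ∑ y ∈ T, #(G.neighborsIn T y) :=
    four_le_sum_card_neighborsIn_of_card_eq_three hT fun y hy =>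
      exists_adj_mem_neighborFinset hcn (ne_of_mem_of_not_mem hy hvT)
  have hout : #(insert v T)ᶜ ≤ ∑ y ∈ (insert v T)ᶜ, #(G.neighborsIn T y) := by
    rw [card_eq_sum_ones]
    refine sum_le_sum fun y hy => card_pos.mpr ?_
    have hyv : y ≠ v := fun e => mem_compl.mp hy (e ▸ mem_insert_self v T)
    obtain ⟨x, hx, hyx⟩ := exists_adj_mem_neighborFinset hcn hyv
    exact ⟨x, mem_neighborsIn.mpr ⟨hx, hyx⟩⟩
  have hTv : G.neighborsIn T v = T :=
    filter_true_of_mem fun y hy => (mem_neighborFinset _ _ _).mp hy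
  have hsumT : Fintype.card V + 3 ≤ ∑ x ∈ T, G.degree x := by
    have hcomm := sum_card_neighborsIn_comm (G := G) T univ
    simp only [neighborsIn_univ, card_neighborFinset_eq_degree] at hcomm
    rw [hcomm, ← sum_add_sum_compl (insert v T), sum_insert hvT, hTv]
    rw [card_compl, card_insert_of_notMem hvT] at hout
    omega
  have hrest : #Tᶜ • 3 ≤ ∑ x ∈ Tᶜ, G.degree x :=
    card_nsmul_le_sum _ _ _ fun x _ => hmin x
  rw [← sum_add_sum_compl T]
  rw [card_compl, smul_eq_mul] at hrest
  omega

lemma adj_of_neighborFinset_eq_pair (hN : G.neighborFinset v = {a, b}) : G.Adj v a := by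
  simpa [hN] using (G.mem_neighborFinset v a).symm

lemma adj_pair_of_neighborFinset_eq_pair
    (hcn : ∀ u w : V, u ≠ w → ∃ x, G.Adj u x ∧ G.Adj w x)
    (hN : G.neighborFinset v = {a, b}) : G.Adj a b := by
  obtain ⟨y, hy, hay⟩ :=
    exists_adj_mem_neighborFinset hcn (G.ne_of_adj (adj_of_neighborFinset_eq_pair hN)).symm
  rw [hN, mem_insert, mem_singleton] at hy
  rcases hy with rfl | rfl
  exacts [absurd hay (G.irrefl), hay]

lemma mem_compl_neighborFinset_of_adj (hN : G.neighborFinset v = {a, b})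
    (hx : x ∈ Gᶜ.neighborFinset v) (hxy : G.Adj x y) (hya : y ≠ a) (hyb : y ≠ b) :
    y ∈ Gᶜ.neighborFinset v := by
  simp only [mem_neighborFinset, compl_adj] at hx ⊢
  refine ⟨fun e => hx.2 (e ▸ hxy.symm), fun hvy => ?_⟩
  have : y ∈ G.neighborFinset v := (G.mem_neighborFinset v y).mpr hvy
  simp [hN, hya, hyb] at this

lemma exists_adj_adj_of_not_adj (hcn : ∀ u w : V, u ≠ w → ∃ x, G.Adj u x ∧ G.Adj w x)
    (hN : G.neighborFinset v = {a, b}) (hx : x ∈ Gᶜ.neighborFinset v) (hbx : ¬G.Adj b x) :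
    ∃ y ∈ Gᶜ.neighborFinset v, G.Adj x y ∧ G.Adj a y := by
  have hxa : x ≠ a := fun e =>
    ((mem_neighborFinset _ _ _).mp hx).2 (e ▸ adj_of_neighborFinset_eq_pair hN)
  obtain ⟨y, hxy, hay⟩ := hcn x a hxa
  refine ⟨y, mem_compl_neighborFinset_of_adj hN hx hxy (G.ne_of_adj hay).symm ?_, hxy, hay⟩
  rintro rfl
  exact hbx hxy.symm

lemma exists_mem_compl_neighborFinset_not_adj (hnd : ∀ w : V, ∃ u, u ≠ w ∧ ¬G.Adj w u)
    (hN : G.neighborFinset v = {a, b}) (hab : G.Adj a b) :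
    ∃ x ∈ Gᶜ.neighborFinset v, ¬G.Adj b x := by
  obtain ⟨x, hxb, hbx⟩ := hnd b
  refine ⟨x, ?_, hbx⟩
  have hvb := adj_of_neighborFinset_eq_pair (hN.trans (pair_comm a b))
  have hxa : x ≠ a := by rintro rfl; exact hbx hab.symm
  simp only [mem_neighborFinset, compl_adj]
  refine ⟨by rintro rfl; exact hbx hvb.symm, fun hvx => ?_⟩
  have : x ∈ G.neighborFinset v := (G.mem_neighborFinset v x).mpr hvx
  simp [hN, hxa, hxb] at this

lemma linkedPair_of_neighborFinset_eq_pair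
    (hcn : ∀ u w : V, u ≠ w → ∃ x, G.Adj u x ∧ G.Adj w x)
    (hnd : ∀ w : V, ∃ u, u ≠ w ∧ ¬G.Adj w u) (hN : G.neighborFinset v = {a, b}) :
    G.LinkedPair (Gᶜ.neighborFinset v) {x ∈ Gᶜ.neighborFinset v | ¬G.Adj b x}
      {x ∈ Gᶜ.neighborFinset v | ¬G.Adj a x} := by
  have hN' : G.neighborFinset v = {b, a} := hN.trans (pair_comm a b)
  have hab := adj_pair_of_neighborFinset_eq_pair hcn hN
  have hcover : ∀ x ∈ Gᶜ.neighborFinset v, G.Adj a x ∨ G.Adj b x := by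
    intro x hx
    obtain ⟨y, hy, hxy⟩ :=
      exists_adj_mem_neighborFinset hcn (Gᶜ.ne_of_adj ((mem_neighborFinset _ _ _).mp hx)).symm
    rw [hN, mem_insert, mem_singleton] at hy
    rcases hy with rfl | rfl
    exacts [Or.inl hxy.symm, Or.inr hxy.symm]
  refine ⟨filter_subset _ _, filter_subset _ _, ?_, ?_, ?_, ?_, ?_, ?_⟩
  · exact disjoint_filter.mpr fun x hx hbx hax => (hcover x hx).elim hax hbx
  · obtain ⟨x, hx, hbx⟩ := exists_mem_compl_neighborFinset_not_adj hnd hN hab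
    exact ⟨x, mem_filter.mpr ⟨hx, hbx⟩⟩
  · obtain ⟨x, hx, hax⟩ := exists_mem_compl_neighborFinset_not_adj hnd hN' hab.symm
    exact ⟨x, mem_filter.mpr ⟨hx, hax⟩⟩
  · intro x hx
    obtain ⟨hxS, hbx⟩ := mem_filter.mp hx
    obtain ⟨y, hy, hxy, hay⟩ := exists_adj_adj_of_not_adj hcn hN hxS hbx
    exact ⟨y, hy, hxy, fun hyB => (mem_filter.mp hyB).2 hay⟩
  · intro x hx
    obtain ⟨hxS, hax⟩ := mem_filter.mp hx
    obtain ⟨y, hy, hxy, hby⟩ := exists_adj_adj_of_not_adj hcn hN' hxS hax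
    exact ⟨y, hy, hxy, fun hyA => (mem_filter.mp hyA).2 hby⟩
  · intro x hx t ht
    obtain ⟨hxS, hbx⟩ := mem_filter.mp hx
    obtain ⟨htS, hat⟩ := mem_filter.mp ht
    have hxt : x ≠ t := by
      rintro rfl
      exact (hcover x hxS).elim hat hbx
    obtain ⟨y, hxy, hty⟩ := hcn x t hxt
    refine ⟨y, mem_compl_neighborFinset_of_adj hN hxS hxy ?_ ?_, hxy, hty⟩
    · rintro rfl; exact hat hty.symm
    · rintro rfl; exact hbx hxy.symm

lemma disjoint_compl_neighborFinset_insert :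
    Disjoint (Gᶜ.neighborFinset v) (insert v (G.neighborFinset v)) := by
  refine Finset.disjoint_left.mpr fun x hx hx' => ?_
  simp only [mem_neighborFinset, compl_adj, mem_insert] at hx hx'
  tauto

lemma card_neighborsIn_add_two_le_degree
    (hcn : ∀ u w : V, u ≠ w → ∃ x, G.Adj u x ∧ G.Adj w x)
    (hN : G.neighborFinset v = {a, b}) :
    #(G.neighborsIn (Gᶜ.neighborFinset v) a) + 2 ≤ G.degree a := by
  have hva := adj_of_neighborFinset_eq_pair hN
  have hab := adj_pair_of_neighborFinset_eq_pair hcn hN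
  have hvb := G.ne_of_adj (adj_of_neighborFinset_eq_pair (hN.trans (pair_comm a b)))
  have hdisj : Disjoint (Gᶜ.neighborFinset v) {v, b} :=
    disjoint_compl_neighborFinset_insert.mono_right (by simp [hN, insert_subset_insert])
  have hvb' : G.neighborsIn {v, b} a = {v, b} := by
    ext y
    simp only [mem_neighborsIn, mem_insert, mem_singleton, and_iff_left_iff_imp]
    rintro (rfl | rfl)
    exacts [hva.symm, hab]
  simpa [hvb', card_pair hvb] using card_neighborsIn_add_card_neighborsIn_le_degree (G := G) hdisj a

lemma four_mul_card_le_sum_degree_add_six_of_neighborFinset_eq_pair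
    (hcn : ∀ u w : V, u ≠ w → ∃ x, G.Adj u x ∧ G.Adj w x)
    (hnd : ∀ w : V, ∃ u, u ≠ w ∧ ¬G.Adj w u) (hab : a ≠ b)
    (hN : G.neighborFinset v = {a, b}) :
    4 * Fintype.card V ≤ ∑ x, G.degree x + 6 := by
  have hN' : G.neighborFinset v = {b, a} := hN.trans (pair_comm a b)
  have hcore :=
    (linkedPair_of_neighborFinset_eq_pair hcn hnd hN).two_mul_card_add_card_le_sum_card_neighborsIn
  have hdeg_a := card_neighborsIn_add_two_le_degree hcn hN
  have hdeg_b := card_neighborsIn_add_two_le_degree hcn hN'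
  set S := Gᶜ.neighborFinset v
  have hvab : insert v (G.neighborFinset v) = {v, a, b} := by rw [hN]
  have hSc : S = {v, a, b}ᶜ := by
    rw [← hvab]
    ext x
    simp [S, compl_adj, eq_comm]
  have hdeg_v : G.degree v = 2 := by rw [← card_neighborFinset_eq_degree, hN, card_pair hab]
  have hdeg_S :
      ∑ x ∈ S, #(G.neighborsIn S x) + (#(G.neighborsIn S a) + #(G.neighborsIn S b)) ≤
        ∑ x ∈ S, G.degree x := by
    rw [← sum_pair (f := fun y => #(G.neighborsIn S y)) hab,
      ← sum_card_neighborsIn_comm S {a, b}, ← sum_add_distrib]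
    exact sum_le_sum fun x _ => card_neighborsIn_add_card_neighborsIn_le_degree
      (disjoint_compl_neighborFinset_insert.mono_right (by simp [hN])) x
  have hA : #(G.neighborsIn S a) + #{x ∈ S | ¬G.Adj a x} = #S :=
    card_filter_add_card_filter_not _
  have hB : #(G.neighborsIn S b) + #{x ∈ S | ¬G.Adj b x} = #S :=
    card_filter_add_card_filter_not _
  have hcard : #S + 3 = Fintype.card V := by
    have h3 : #({v, a, b} : Finset V) = 3 := by
      rw [← hvab, card_insert_of_notMem (by simp), card_neighborFinset_eq_degree, hdeg_v]
    rw [hSc, card_compl, h3]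
    have := card_le_univ ({v, a, b} : Finset V)
    omega
  have hsum :
      ∑ x, G.degree x = G.degree v + (G.degree a + G.degree b) + ∑ x ∈ S, G.degree x := by
    have hva := G.ne_of_adj (adj_of_neighborFinset_eq_pair hN)
    have hvb := G.ne_of_adj (adj_of_neighborFinset_eq_pair hN')
    rw [← sum_add_sum_compl {v, a, b}, ← hSc, sum_insert (by simp [hva, hvb]), sum_pair hab]
  omega

theorem four_mul_card_le_sum_degree_add_six
    (hcn : ∀ u w : V, u ≠ w → ∃ x, G.Adj u x ∧ G.Adj w x)
    (hnd : ∀ w : V, ∃ u, u ≠ w ∧ ¬G.Adj w u) :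
    4 * Fintype.card V ≤ ∑ x, G.degree x + 6 := by
  cases isEmpty_or_nonempty V
  · simp
  obtain ⟨v, hv⟩ := G.exists_minimal_degree_vertex
  have hmin : ∀ x, G.degree v ≤ G.degree x := fun x => hv ▸ G.minDegree_le_degree x
  have h2 := two_le_degree hcn hnd v
  by_cases h4 : 4 ≤ G.degree v
  · have := card_nsmul_le_sum univ (fun x => G.degree x) 4 fun x _ => h4.trans (hmin x)
    rw [card_univ, smul_eq_mul] at this
    omega
  rcases (by omega : G.degree v = 2 ∨ G.degree v = 3) with hv2 | hv3
  · obtain ⟨a, b, hab, hN⟩ := card_eq_two.mp ((card_neighborFinset_eq_degree G v).trans hv2)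
    exact four_mul_card_le_sum_degree_add_six_of_neighborFinset_eq_pair hcn hnd hab hN
  · exact four_mul_card_le_sum_degree_add_six_of_degree_eq_three hcn (fun x => hv3 ▸ hmin x) hv3

end Decidable

end SimpleGraph

/-- If `G` is an `n`-vertex graph with `diam(G) = rad(G) = 2` satisfying the
triangle-property (every edge lies in a triangle), then `G` has at least
`2n - 3` edges. -/
theorem stmt12 (n : ℕ) (G : SimpleGraph (Fin n)) [DecidableRel G.Adj]
    (hconn : G.Connected)
    (hdiam : ∀ u v : Fin n, G.dist u v ≤ 2)
    (hrad : ∀ v : Fin n, ∃ u : Fin n, 2 ≤ G.dist v u)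
    (htri : ∀ u v : Fin n, G.Adj u v → ∃ w : Fin n, G.Adj u w ∧ G.Adj v w) :
    2 * n - 3 ≤ G.edgeFinset.card := by
  have hcn : ∀ u w, u ≠ w → ∃ x, G.Adj u x ∧ G.Adj w x := fun u w huw =>
    if hadj : G.Adj u w then htri u w hadj
    else hconn.exists_adj_adj_of_dist_le_two huw hadj (hdiam u w)
  have hnd : ∀ w, ∃ u, u ≠ w ∧ ¬G.Adj w u := fun w => by
    obtain ⟨u, hu⟩ := hrad w
    refine ⟨u, by rintro rfl; simp at hu, fun hwu => ?_⟩
    rw [SimpleGraph.dist_eq_one_iff_adj.mpr hwu] at hu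
    omega
  have := SimpleGraph.four_mul_card_le_sum_degree_add_six hcn hnd
  rw [SimpleGraph.sum_degrees_eq_twice_card_edges, Fintype.card_fin] at this
  omega
end

section
/- Let G be a graph on n vertices such that every edge of G lies in a triangle and G is connected. Then |E(G)| ≥ (3/2)(n−1). -/
/-!
Grow a vertex set `S` from a single vertex while keeping `2 e(S) ≥ 3 (|S| - 1)`, where `e(S)`
counts the edges inside `S`. If `S` is not everything, connectivity gives an edge `ab` leaving
`S`, and the triangle property a common neighbour `w` of `a` and `b`. If `w ∈ S`, adding `b`
adds the two edges `ab`, `wb`; otherwise adding `w` and `b` adds the three edges of the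
triangle `abw`. Either way the invariant survives, and at `S = V` it is the claim.
-/

open Finset

namespace SimpleGraph

variable {V : Type*} {G : SimpleGraph V}

theorem Connected.exists_adj_of_nonempty_of_ne_univ [Fintype V] (hconn : G.Connected)
    {S : Finset V} (hS : S.Nonempty) (hne : S ≠ univ) : ∃ a ∈ S, ∃ b ∉ S, G.Adj a b := by
  obtain ⟨u, hu⟩ := hS
  obtain ⟨v, hv⟩ := not_forall.mp (mt eq_univ_of_forall hne)
  obtain ⟨d, -, hd, hd'⟩ := (hconn.preconnected u v).some.exists_boundary_dart (S : Set V) hu hv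
  exact ⟨d.fst, hd, d.snd, hd', d.adj⟩

variable [DecidableRel G.Adj]

/-- Each edge inside `S` appears twice, once per orientation. -/
def adjPairs (G : SimpleGraph V) [DecidableRel G.Adj] (S : Finset V) : Finset (V × V) :=
  {p ∈ S ×ˢ S | G.Adj p.1 p.2}

theorem card_adjPairs_univ [Fintype V] [DecidableEq V] :
    #(G.adjPairs univ) = 2 * #G.edgeFinset := by
  rw [two_mul_card_edgeFinset]
  congr 1

theorem card_adjPairs_add_le_card_adjPairs_insert [DecidableEq V] {S N : Finset V} {b : V}
    (hb : b ∉ S) (hN : N ⊆ S) (hadj : ∀ x ∈ N, G.Adj x b) :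
    #(G.adjPairs S) + 2 * #N ≤ #(G.adjPairs (insert b S)) := by
  have hbN : b ∉ N := fun h => hb (hN h)
  have hin : Disjoint (G.adjPairs S) (N ×ˢ {b}) := by
    rw [Finset.disjoint_left]
    simp only [adjPairs, mem_filter, mem_product, mem_singleton]
    exact fun _ hp hp' => hb (hp'.2 ▸ hp.1.2)
  have hout : Disjoint (G.adjPairs S ∪ N ×ˢ {b}) ({b} ×ˢ N) := by
    rw [Finset.disjoint_right]
    simp only [adjPairs, mem_union, mem_filter, mem_product, mem_singleton]
    rintro _ ⟨rfl, hp⟩ (h | h)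
    exacts [hb h.1.1, hbN h.1]
  have hsub : G.adjPairs S ∪ N ×ˢ {b} ∪ {b} ×ˢ N ⊆ G.adjPairs (insert b S) := by
    simp only [subset_iff, adjPairs, mem_union, mem_filter, mem_product, mem_insert,
      mem_singleton]
    rintro ⟨x, y⟩ ((h | ⟨hx, rfl⟩) | ⟨rfl, hy⟩)
    · exact ⟨⟨.inr h.1.1, .inr h.1.2⟩, h.2⟩
    · exact ⟨⟨.inr (hN hx), .inl rfl⟩, hadj x hx⟩
    · exact ⟨⟨.inl rfl, .inr (hN hy)⟩, (hadj y hy).symm⟩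
  calc #(G.adjPairs S) + 2 * #N
      = #(G.adjPairs S ∪ N ×ˢ {b} ∪ {b} ×ˢ N) := by
        rw [card_union_of_disjoint hout, card_union_of_disjoint hin, card_product,
          card_product, card_singleton]
        ring
    _ ≤ #(G.adjPairs (insert b S)) := card_le_card hsub

theorem exists_card_lt_of_triangle_invariant [Fintype V] [DecidableEq V] (hconn : G.Connected)
    (htri : ∀ u v, G.Adj u v → ∃ w, G.Adj u w ∧ G.Adj v w)
    {S : Finset V} (hS : S.Nonempty) (hne : S ≠ univ) (hinv : 3 * #S ≤ #(G.adjPairs S) + 3) :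
    ∃ T : Finset V, #S < #T ∧ 3 * #T ≤ #(G.adjPairs T) + 3 := by
  obtain ⟨a, ha, b, hb, hab⟩ := hconn.exists_adj_of_nonempty_of_ne_univ hS hne
  obtain ⟨w, haw, hbw⟩ := htri a b hab
  by_cases hw : w ∈ S
  · have hgain := card_adjPairs_add_le_card_adjPairs_insert (G := G) (N := {a, w}) hb
      (by simp [insert_subset_iff, ha, hw]) (by simp [hab, hbw.symm])
    rw [card_pair haw.ne] at hgain
    refine ⟨insert b S, ?_, ?_⟩ <;> rw [card_insert_of_notMem hb] <;> omega
  · have hbw' : b ∉ insert w S := by simp [hb, hbw.ne]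
    have hgain_w := card_adjPairs_add_le_card_adjPairs_insert (G := G) (N := {a}) hw
      (by simp [ha]) (by simp [haw])
    have hgain_b := card_adjPairs_add_le_card_adjPairs_insert (G := G) (N := {a, w}) hbw'
      (by simp [insert_subset_iff, ha]) (by simp [hab, hbw.symm])
    rw [card_singleton] at hgain_w
    rw [card_pair haw.ne] at hgain_b
    refine ⟨insert b (insert w S), ?_, ?_⟩ <;>
      rw [card_insert_of_notMem hbw', card_insert_of_notMem hw] <;> omega

theorem Connected.three_mul_card_sub_one_le_two_mul_card_edgeFinset [Fintype V] [DecidableEq V]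
    (hconn : G.Connected) (htri : ∀ u v, G.Adj u v → ∃ w, G.Adj u w ∧ G.Adj v w) :
    3 * (Fintype.card V - 1) ≤ 2 * #G.edgeFinset := by
  obtain ⟨v⟩ := hconn.nonempty
  let good : Finset (Finset V) := {S | S.Nonempty ∧ 3 * #S ≤ #(G.adjPairs S) + 3}
  obtain ⟨S, hS, hmax⟩ := good.exists_max_image card ⟨{v}, by simp [good]⟩
  simp only [good, mem_filter, mem_univ, true_and] at hS hmax
  obtain rfl : S = univ := by
    by_contra hne
    obtain ⟨T, hlt, hT⟩ := exists_card_lt_of_triangle_invariant hconn htri hS.1 hne hS.2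
    exact (hmax T ⟨card_pos.mp (by omega), hT⟩).not_gt hlt
  have := hS.2
  rw [card_univ, card_adjPairs_univ] at this
  omega

end SimpleGraph

/-- A connected graph on `n` vertices in which every edge lies in a triangle has
at least `(3/2)(n-1)` edges. -/
theorem stmt14 (n : ℕ) (G : SimpleGraph (Fin n)) [DecidableRel G.Adj]
    (hconn : G.Connected)
    (htri : ∀ u v : Fin n, G.Adj u v → ∃ w : Fin n, G.Adj u w ∧ G.Adj v w) :
    3 * (n - 1) ≤ 2 * G.edgeFinset.card := by
  simpa using hconn.three_mul_card_sub_one_le_two_mul_card_edgeFinset htri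
end

section
/- Let n = qk with k ≥ 3, and let F ⊆ C([n],k) be non-trivial and union-q-efficient. Define the graph G on vertex set [n] where i and j are adjacent iff no set of F contains both i and j. Then the minimum degree of G is at least q−1, the maximum degree is at most (q−1)k, and for every two vertices u, v the common neighborhood contains a clique on q−2 vertices. -/
/-!
If every point outside a set `T` of fewer than `q` points shared a member of `F` with some
point of `T`, the members of `F` meeting `T` would cover the ground set. Union-efficiency
extracts `q` of them still covering it; each has at most `k - 1` points outside `T`, so
`n ≤ q (k - 1) + |T| < q k = n`. Hence every such `T` has a common neighbour in `G`, and
adding these greedily gives a clique on `q - |T|` vertices in the common neighbourhood of `T`.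
The degree upper bound holds because `v` lies in a `k`-set of `F` containing no neighbour of `v`.
-/

open Finset

def uncoveredPairsGraph {α : Type*} (F : Finset (Finset α)) : SimpleGraph α where
  Adj i j := i ≠ j ∧ ∀ A ∈ F, ¬(i ∈ A ∧ j ∈ A)
  symm := ⟨fun _ _ h => ⟨h.1.symm, fun A hA hij => h.2 A hA hij.symm⟩⟩
  loopless := ⟨fun _ h => h.1 rfl⟩

variable {α : Type*} [Fintype α] [DecidableEq α]

def IsUnionEfficient (q : ℕ) (F : Finset (Finset α)) : Prop :=
  ∀ F' ⊆ F, F'.sup id = univ → ∃ G ⊆ F', #G = q ∧ G.sup id = univ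

theorem ncard_neighborSet_uncoveredPairsGraph_le {k : ℕ} {F : Finset (Finset α)}
    (hcov : F.sup id = univ) (hF : ∀ A ∈ F, k ≤ #A) (v : α) :
    ((uncoveredPairsGraph F).neighborSet v).ncard ≤ Fintype.card α - k := by
  obtain ⟨A, hAF, hvA⟩ := mem_sup.1 (hcov ▸ mem_univ v)
  have hsub : (uncoveredPairsGraph F).neighborSet v ⊆ ((Aᶜ : Finset α) : Set α) :=
    fun u hu => by simpa using fun huA => hu.2 A hAF ⟨hvA, huA⟩
  calc ((uncoveredPairsGraph F).neighborSet v).ncard ≤ #Aᶜ :=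
        (Set.ncard_le_ncard hsub).trans_eq (Set.ncard_coe_finset _)
    _ ≤ Fintype.card α - k := by
        rw [card_compl]
        exact Nat.sub_le_sub_left (hF A hAF) _

namespace IsUnionEfficient

variable {q k : ℕ} {F : Finset (Finset α)}

theorem exists_forall_adj (heff : IsUnionEfficient q F) (hcov : F.sup id = univ)
    (hF : ∀ A ∈ F, #A ≤ k) (hcard : q * k ≤ Fintype.card α) {T : Finset α} (hT : #T < q) :
    ∃ w, ∀ t ∈ T, (uncoveredPairsGraph F).Adj t w := by
  by_contra! hcon
  set F' := F.filter fun A => ∃ t ∈ T, t ∈ A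
  have hF'cov : F'.sup id = univ := by
    refine eq_univ_of_forall fun x => mem_sup.2 ?_
    by_cases hx : x ∈ T
    · obtain ⟨A, hAF, hxA⟩ := mem_sup.1 (hcov ▸ mem_univ x)
      exact ⟨A, mem_filter.2 ⟨hAF, x, hx, hxA⟩, hxA⟩
    · obtain ⟨t, ht, hnadj⟩ := hcon x
      have htx : t ≠ x := fun h => hx (h ▸ ht)
      obtain ⟨A, hAF, htA, hxA⟩ : ∃ A ∈ F, t ∈ A ∧ x ∈ A := by
        simpa [uncoveredPairsGraph, htx] using hnadj
      exact ⟨A, mem_filter.2 ⟨hAF, t, ht, htA⟩, hxA⟩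
  obtain ⟨G, hGF', hGcard, hGcov⟩ := heff F' (filter_subset _ _) hF'cov
  have houtside : ∀ A ∈ G, #(A \ T) + 1 ≤ k := by
    intro A hA
    obtain ⟨hAF, t, ht, htA⟩ := mem_filter.1 (hGF' hA)
    have : 0 < #(A ∩ T) := card_pos.2 ⟨t, mem_inter.2 ⟨htA, ht⟩⟩
    have := card_sdiff_add_card_inter A T
    have := hF A hAF
    omega
  have hcover : univ ⊆ T ∪ G.biUnion (· \ T) := by
    intro x _
    obtain ⟨A, hA, hxA⟩ := mem_sup.1 (hGcov ▸ mem_univ x)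
    by_cases hx : x ∈ T
    · exact mem_union_left _ hx
    · exact mem_union_right _ (mem_biUnion.2 ⟨A, hA, mem_sdiff.2 ⟨hxA, hx⟩⟩)
  have hupper : Fintype.card α ≤ #T + ∑ A ∈ G, #(A \ T) :=
    calc Fintype.card α = #(univ : Finset α) := card_univ.symm
      _ ≤ #(T ∪ G.biUnion (· \ T)) := card_le_card hcover
      _ ≤ #T + #(G.biUnion (· \ T)) := card_union_le _ _
      _ ≤ #T + ∑ A ∈ G, #(A \ T) := Nat.add_le_add_left card_biUnion_le _
  have hlower : ∑ A ∈ G, #(A \ T) + q ≤ q * k :=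
    calc ∑ A ∈ G, #(A \ T) + q = ∑ A ∈ G, (#(A \ T) + 1) := by
          rw [sum_add_distrib, sum_const, hGcard, smul_eq_mul, mul_one]
      _ ≤ ∑ _A ∈ G, k := sum_le_sum houtside
      _ = q * k := by rw [sum_const, hGcard, smul_eq_mul]
  omega

theorem exists_isNClique_forall_adj (heff : IsUnionEfficient q F) (hcov : F.sup id = univ)
    (hF : ∀ A ∈ F, #A ≤ k) (hcard : q * k ≤ Fintype.card α) (T : Finset α) :
    ∃ S, (uncoveredPairsGraph F).IsNClique (q - #T) S ∧
      ∀ t ∈ T, ∀ w ∈ S, (uncoveredPairsGraph F).Adj t w := by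
  obtain ⟨m, hm⟩ : ∃ m, q - #T = m := ⟨_, rfl⟩
  induction m generalizing T with
  | zero => exact ⟨∅, by simp [hm], by simp⟩
  | succ m ih =>
    obtain ⟨w, hw⟩ := heff.exists_forall_adj hcov hF hcard (T := T) (by omega)
    have hwT : w ∉ T := fun h => (uncoveredPairsGraph F).irrefl (hw w h)
    have hm' : q - #(insert w T) = m := by rw [card_insert_of_notMem hwT]; omega
    obtain ⟨S, hS, hTS⟩ := ih (insert w T) hm'
    rw [hm'] at hS
    refine ⟨insert w S, hm ▸ hS.insert fun s hs => hTS w (mem_insert_self w T) s hs, ?_⟩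
    intro t ht s hs
    rcases mem_insert.1 hs with rfl | hs
    · exact hw t ht
    · exact hTS t (mem_insert_of_mem ht) s hs

theorem le_ncard_neighborSet (heff : IsUnionEfficient q F) (hcov : F.sup id = univ)
    (hF : ∀ A ∈ F, #A ≤ k) (hcard : q * k ≤ Fintype.card α) (v : α) :
    q - 1 ≤ ((uncoveredPairsGraph F).neighborSet v).ncard := by
  obtain ⟨S, hS, hadj⟩ := heff.exists_isNClique_forall_adj hcov hF hcard {v}
  calc q - 1 = (S : Set α).ncard := by rw [Set.ncard_coe_finset, hS.card_eq, card_singleton]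
    _ ≤ _ := Set.ncard_le_ncard fun w hw => hadj v (mem_singleton_self v) w hw

end IsUnionEfficient

theorem stmt15_general (q k n : ℕ) (hn : n = q * k)
    (F : Finset (Finset (Fin n))) (hF : ∀ A ∈ F, A.card = k)
    (hnontriv : F.sup id = Finset.univ)
    (heff : ∀ F' ⊆ F, F'.sup id = Finset.univ →
      ∃ G ⊆ F', G.card = q ∧ G.sup id = Finset.univ)
    (Adj : Fin n → Fin n → Prop)
    (hAdj : ∀ i j, Adj i j ↔ i ≠ j ∧ ∀ A ∈ F, ¬ (i ∈ A ∧ j ∈ A)) :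
    (∀ v : Fin n, q - 1 ≤ {u : Fin n | Adj v u}.ncard) ∧
    (∀ v : Fin n, {u : Fin n | Adj v u}.ncard ≤ (q - 1) * k) ∧
    (∀ u v : Fin n, u ≠ v →
      ∃ S : Finset (Fin n), S.card = q - 2 ∧
        (∀ w ∈ S, Adj u w ∧ Adj v w) ∧
        (∀ w ∈ S, ∀ w' ∈ S, w ≠ w' → Adj w w')) := by
  obtain rfl : Adj = (uncoveredPairsGraph F).Adj := funext₂ fun i j => propext (hAdj i j)
  have heff : IsUnionEfficient q F := heff
  have hF_le : ∀ A ∈ F, #A ≤ k := fun A hA => (hF A hA).le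
  have hcard : q * k ≤ Fintype.card (Fin n) := by simp [hn]
  refine ⟨heff.le_ncard_neighborSet hnontriv hF_le hcard, fun v => ?_, fun u v huv => ?_⟩
  · calc _ ≤ Fintype.card (Fin n) - k :=
          ncard_neighborSet_uncoveredPairsGraph_le hnontriv (fun A hA => (hF A hA).ge) v
      _ = (q - 1) * k := by rw [Fintype.card_fin, hn, Nat.sub_one_mul]
  · obtain ⟨S, hS, hadj⟩ := heff.exists_isNClique_forall_adj hnontriv hF_le hcard {u, v}
    rw [card_pair huv] at hS
    exact ⟨S, hS.card_eq, fun w hw => ⟨hadj u (by simp) w hw, hadj v (by simp) w hw⟩,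
      fun w hw w' hw' hne => hS.isClique hw hw' hne⟩

/-- Let `n = qk`, `k ≥ 3`, and `F ⊆ C([n],k)` non-trivial union-`q`-efficient.
Let `G` be the graph on `[n]` where `i ~ j` iff no member of `F` contains both
`i` and `j` (the complement of the 2-shadow of `F`). Then `δ(G) ≥ q-1`,
`Δ(G) ≤ (q-1)k`, and the common neighborhood of any two vertices contains a
clique on `q-2` vertices. -/
theorem stmt15 (q k n : ℕ) (hk : 3 ≤ k) (hn : n = q * k)
    (F : Finset (Finset (Fin n))) (hF : ∀ A ∈ F, A.card = k)
    (hnontriv : F.sup id = Finset.univ)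
    (heff : ∀ F' ⊆ F, F'.sup id = Finset.univ →
      ∃ G ⊆ F', G.card = q ∧ G.sup id = Finset.univ)
    (Adj : Fin n → Fin n → Prop)
    (hAdj : ∀ i j, Adj i j ↔ i ≠ j ∧ ∀ A ∈ F, ¬ (i ∈ A ∧ j ∈ A)) :
    (∀ v : Fin n, q - 1 ≤ {u : Fin n | Adj v u}.ncard) ∧
    (∀ v : Fin n, {u : Fin n | Adj v u}.ncard ≤ (q - 1) * k) ∧
    (∀ u v : Fin n, u ≠ v →
      ∃ S : Finset (Fin n), S.card = q - 2 ∧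
        (∀ w ∈ S, Adj u w ∧ Adj v w) ∧
        (∀ w ∈ S, ∀ w' ∈ S, w ≠ w' → Adj w w')) :=
  stmt15_general q k n hn F hF hnontriv heff Adj hAdj
end
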